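/- arXiv:1310.1772 — 13 statements merged into one kernel-verified Lean document; each statement's English description precedes it below -/
import Mathlib

section
/- Let q = p^r be a power of a prime p and let F_{q^2} denote the finite field with q^2 elements. If u, v, w ∈ F_{q^2} satisfy u^{q-1} + v^{q-1} + w^{q-1} = 0, then there exists s ∈ F_{q^2} with u·v·w = s^3 (i.e., uvw is a cube in F_{q^2}). -/
lemma cube_of_pow {F : Type*} [Field F] [Fintype F] {x : F} (hx : x ≠ 0)
    (h3 : 3 ∣ Fintype.card F - 1) (hpow : x ^ ((Fintype.card F - 1) / 3) = 1) :
    ∃ s : F, x = s ^ 3 := by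
  set n := Fintype.card F - 1 with hn
  have hn0 : 0 < n := by
    have := Fintype.one_lt_card (α := F)
    omega
  obtain ⟨g, hg⟩ := IsCyclic.exists_generator (α := Fˣ)
  have hog : orderOf g = n := by
    rw [orderOf_eq_card_of_forall_mem_zpowers hg, Nat.card_units, Nat.card_eq_fintype_card, hn]
  set X : Fˣ := Units.mk0 x hx with hX
  obtain ⟨k, hk⟩ := hg X
  have hXpow : X ^ ((n / 3 : ℕ) : ℤ) = 1 := by
    rw [zpow_natCast]
    ext
    rw [Units.val_pow_eq_pow_val]
    simpa [hX] using hpow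
  rw [← hk, ← zpow_mul] at hXpow
  have hdvd : (n : ℤ) ∣ k * ((n / 3 : ℕ) : ℤ) := by
    have := orderOf_dvd_iff_zpow_eq_one.mpr hXpow
    rwa [hog] at this
  obtain ⟨c, hc⟩ := h3
  have hc0 : 0 < c := by omega
  have hnc : (n / 3 : ℕ) = c := by omega
  obtain ⟨m, hm⟩ : (3 : ℤ) ∣ k := by
    rw [hnc, hc] at hdvd
    push_cast at hdvd
    obtain ⟨d, hd⟩ := hdvd
    refine ⟨d, mul_right_cancel₀ (b := (c : ℤ)) (by exact_mod_cast hc0.ne') ?_⟩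
    rw [hd]; ring
  refine ⟨((g ^ m : Fˣ) : F), ?_⟩
  have : X = (g ^ m) ^ (3 : ℕ) := by
    rw [← hk, hm, ← zpow_natCast (g ^ m), ← zpow_mul]
    ring_nf
  calc x = (X : F) := rfl
    _ = _ := by rw [this]; push_cast; ring

theorem fermat_curve_cube_Fq2 {p r : ℕ} (hp : p.Prime) (hr : 0 < r) {q : ℕ} (hq : q = p ^ r)
    {F : Type*} [Field F] [Fintype F] (hF : Fintype.card F = q ^ 2)
    (u v w : F) (h : u ^ (q - 1) + v ^ (q - 1) + w ^ (q - 1) = 0) :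
    ∃ s : F, u * v * w = s ^ 3 := by
  have hq2 : 2 ≤ q := by
    rw [hq]
    calc 2 ≤ p := hp.two_le
      _ ≤ p ^ r := Nat.le_self_pow hr.ne' p
  by_cases hu : u = 0
  · exact ⟨0, by rw [hu]; ring⟩
  by_cases hv : v = 0
  · exact ⟨0, by rw [hv]; ring⟩
  by_cases hw : w = 0
  · exact ⟨0, by rw [hw]; ring⟩
  haveI := Fact.mk hp
  -- characteristic
  obtain ⟨p', hcp'⟩ := CharP.exists F
  haveI := hcp'
  have hp' : p'.Prime := CharP.char_is_prime F p'
  have hpp' : p = p' := by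
    obtain ⟨n, hpn, hcard⟩ := FiniteField.card F p'
    have hdvd : p ∣ p' ^ (n : ℕ) := by
      rw [← hcard, hF, hq]
      exact dvd_pow (dvd_pow_self p hr.ne') two_ne_zero
    exact (Nat.prime_dvd_prime_iff_eq hp hp').mp (hp.dvd_of_dvd_pow hdvd)
  haveI hch : CharP F p := by rw [hpp']; exact hcp'
  -- arithmetic
  have hmul : (q - 1) * (q + 1) = q ^ 2 - 1 := by
    obtain ⟨k, rfl⟩ : ∃ k, q = k + 2 := ⟨q - 2, by omega⟩
    have e1 : (k + 2) ^ 2 = k * k + 4 * k + 4 := by ring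
    have e2 : (k + 2 - 1) * (k + 2 + 1) = k * k + 4 * k + 3 := by norm_num; ring
    omega
  have hcard : ∀ x : F, x ≠ 0 → x ^ (q ^ 2 - 1) = 1 := by
    intro x hx
    have := FiniteField.pow_card_sub_one_eq_one x hx
    rwa [hF] at this
  set a := u ^ (q - 1) with ha_def
  set b := v ^ (q - 1) with hb_def
  set c := w ^ (q - 1) with hc_def
  have hA1 : a ^ (q + 1) = 1 := by rw [ha_def, ← pow_mul, hmul]; exact hcard u hu
  have hB1 : b ^ (q + 1) = 1 := by rw [hb_def, ← pow_mul, hmul]; exact hcard v hv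
  have hC1 : c ^ (q + 1) = 1 := by rw [hc_def, ← pow_mul, hmul]; exact hcard w hw
  have ha : a ≠ 0 := by rw [ha_def]; exact pow_ne_zero _ hu
  have hb : b ≠ 0 := by rw [hb_def]; exact pow_ne_zero _ hv
  have hc : c ≠ 0 := by rw [hc_def]; exact pow_ne_zero _ hw
  -- Frobenius
  have hfr : ∀ x y : F, (x + y) ^ q = x ^ q + y ^ q := by
    intro x y; rw [hq]; exact add_pow_char_pow ..
  have h0 : a ^ q + b ^ q + c ^ q = 0 := by
    have : (a + b + c) ^ q = 0 := by rw [h]; exact zero_pow (by omega)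
    rwa [hfr, hfr] at this
  have ha1 : a ^ q * a = 1 := by rw [← pow_succ]; exact hA1
  have hb1 : b ^ q * b = 1 := by rw [← pow_succ]; exact hB1
  have hc1 : c ^ q * c = 1 := by rw [← pow_succ]; exact hC1
  have e2 : a * b + b * c + c * a = 0 := by
    linear_combination a * b * c * h0 - b * c * ha1 - c * a * hb1 - a * b * hc1
  have cubA : a ^ 3 = a * b * c := by linear_combination a ^ 2 * h - a * e2
  have cubB : b ^ 3 = a * b * c := by linear_combination b ^ 2 * h - b * e2
  have cubC : c ^ 3 = a * b * c := by linear_combination c ^ 2 * h - c * e2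
  set x := u * v * w with hx_def
  have hx : x ≠ 0 := by
    rw [hx_def]; exact mul_ne_zero (mul_ne_zero hu hv) hw
  have hxn : x ^ (q ^ 2 - 1) = 1 := hcard x hx
  have hm3 : q % 3 < 3 := Nat.mod_lt q (by norm_num)
  interval_cases hqm : q % 3
  · -- q ≡ 0 mod 3 : 3 coprime to q^2-1, everything is a cube
    have h3q : 3 ∣ q ^ 2 := dvd_pow (Nat.dvd_of_mod_eq_zero hqm) two_ne_zero
    have hq4 : 4 ≤ q ^ 2 := by nlinarith
    have hcop : Nat.Coprime 3 (q ^ 2 - 1) :=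
      (Nat.Prime.coprime_iff_not_dvd Nat.prime_three).mpr (by omega)
    obtain ⟨m, -, hm⟩ := Nat.exists_mul_mod_eq_one_of_coprime hcop (by omega)
    refine ⟨x ^ m, ?_⟩
    have key : x ^ (3 * m) = x := by
      conv_lhs => rw [← Nat.div_add_mod (3 * m) (q ^ 2 - 1)]
      rw [pow_add, pow_mul, hxn, one_pow, one_mul, hm, pow_one]
    rw [← pow_mul, mul_comm m 3, key]
  · -- q ≡ 1 mod 3 : contradiction
    exfalso
    have habc : a * b * c ≠ 0 := mul_ne_zero (mul_ne_zero ha hb) hc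
    have hcop : Nat.Coprime 3 (q + 1) :=
      (Nat.Prime.coprime_iff_not_dvd Nat.prime_three).mpr (by omega)
    have hba : b = a := by
      have h1 : (b / a) ^ 3 = 1 := by rw [div_pow, cubB, cubA, div_self habc]
      have h2 : (b / a) ^ (q + 1) = 1 := by rw [div_pow, hA1, hB1, div_one]
      have hord : orderOf (b / a) ∣ Nat.gcd 3 (q + 1) :=
        Nat.dvd_gcd (orderOf_dvd_of_pow_eq_one h1) (orderOf_dvd_of_pow_eq_one h2)
      rw [hcop] at hord
      have : b / a = 1 := orderOf_eq_one_iff.mp (Nat.dvd_one.mp hord)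
      field_simp at this
      exact this
    have hca : c = a := by
      have h1 : (c / a) ^ 3 = 1 := by rw [div_pow, cubC, cubA, div_self habc]
      have h2 : (c / a) ^ (q + 1) = 1 := by rw [div_pow, hA1, hC1, div_one]
      have hord : orderOf (c / a) ∣ Nat.gcd 3 (q + 1) :=
        Nat.dvd_gcd (orderOf_dvd_of_pow_eq_one h1) (orderOf_dvd_of_pow_eq_one h2)
      rw [hcop] at hord
      have : c / a = 1 := orderOf_eq_one_iff.mp (Nat.dvd_one.mp hord)
      field_simp at this
      exact this
    rw [hba, hca] at h
    have h3 : (3 : F) * a = 0 := by linear_combination h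
    have h30 : (3 : F) = 0 := by
      rcases mul_eq_zero.mp h3 with h' | h'
      · exact h'
      · exact absurd h' ha
    have : (p : ℕ) ∣ 3 := (CharP.cast_eq_zero_iff F p 3).mp (by exact_mod_cast h30)
    have hp3 : p = 3 := (Nat.prime_dvd_prime_iff_eq hp Nat.prime_three).mp this
    have : 3 ∣ q := by rw [hq, hp3]; exact dvd_pow_self 3 hr.ne'
    omega
  · -- q ≡ 2 mod 3 : 3 ∣ q+1
    obtain ⟨k, hk⟩ : ∃ k, q + 1 = 3 * k := ⟨(q + 1) / 3, by omega⟩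
    have h3d : 3 ∣ q ^ 2 - 1 := by
      rw [← hmul, hk]
      exact ⟨(q - 1) * k, by ring⟩
    have hdiv : (q ^ 2 - 1) / 3 = (q - 1) * k := by
      have e : (q - 1) * (3 * k) = 3 * ((q - 1) * k) := by ring
      rw [← hmul, hk, e, Nat.mul_div_cancel_left _ (by norm_num : 0 < 3)]
    have hx1 : x ^ (q - 1) = a ^ 3 := by
      rw [hx_def, mul_pow, mul_pow]; exact cubA.symm
    have hpow : x ^ ((q ^ 2 - 1) / 3) = 1 := by
      rw [hdiv, pow_mul, hx1, ← pow_mul, ← hk, hA1]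
    obtain ⟨s, hs⟩ := cube_of_pow hx (by rw [hF]; exact h3d) (by rw [hF]; exact hpow)
    exact ⟨s, hs⟩
end

section
/- Let q = p^r be a power of a prime p and let F_{q^3} denote the finite field with q^3 elements. If u, v, w ∈ F_{q^3} satisfy u^{q-1} + v^{q-1} + w^{q-1} = 0, then there exists s ∈ F_{q^3} with u·v·w = s^3 (i.e., uvw is a cube in F_{q^3}). -/
lemma cube_of_not_dvd {F : Type*} [Field F] [Fintype F]
    (h3 : ¬ 3 ∣ Fintype.card F - 1) (z : F) : ∃ s : F, z = s ^ 3 := by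
  classical
  rcases eq_or_ne z 0 with rfl | hz
  · exact ⟨0, by simp⟩
  · have hcop : (Nat.card Fˣ).Coprime 3 := by
      rw [Nat.card_eq_fintype_card, Fintype.card_units]
      exact (Nat.coprime_comm.mp ((Nat.Prime.coprime_iff_not_dvd (by norm_num)).mpr h3))
    obtain ⟨s, hs⟩ := (powCoprime hcop).surjective (Units.mk0 z hz)
    rw [powCoprime_apply] at hs
    exact ⟨(s : F), by
      have : ((s ^ 3 : Fˣ) : F) = z := by rw [hs]; rfl
      simpa using this.symm⟩

lemma cube_of_pow_eq_one {F : Type*} [Field F] [Fintype F]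
    (hd : 3 ∣ Fintype.card F - 1) {z : F}
    (hz : z ^ ((Fintype.card F - 1) / 3) = 1) : ∃ s : F, z = s ^ 3 := by
  classical
  obtain ⟨M, hM⟩ := hd
  have hcard : 2 ≤ Fintype.card F := Fintype.one_lt_card
  have hM0 : 0 < M := by
    rcases Nat.eq_zero_or_pos M with rfl | h
    · omega
    · exact h
  have hMdiv : (Fintype.card F - 1) / 3 = M := by omega
  rw [hMdiv] at hz
  have hz0 : z ≠ 0 := by
    intro h0
    rw [h0, zero_pow (by omega)] at hz
    exact zero_ne_one hz
  obtain ⟨g, hg⟩ := IsCyclic.exists_monoid_generator (α := Fˣ)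
  obtain ⟨k, hk⟩ := hg (Units.mk0 z hz0)
  dsimp only at hk
  have hgz : ∀ x : Fˣ, x ∈ Subgroup.zpowers g := fun x => by
    obtain ⟨n, hn⟩ := hg x
    exact ⟨n, by simpa using hn⟩
  have horder : orderOf g = Fintype.card F - 1 := by
    rw [orderOf_eq_card_of_forall_mem_zpowers hgz, Nat.card_eq_fintype_card,
      Fintype.card_units]
  have hone : g ^ (k * M) = 1 := by
    have h1 : (Units.mk0 z hz0) ^ M = 1 := by
      ext
      push_cast
      simpa using hz
    rw [pow_mul, hk, h1]
  have hdvd : orderOf g ∣ k * M := orderOf_dvd_of_pow_eq_one hone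
  rw [horder, hM] at hdvd
  have h3k : 3 ∣ k := (Nat.mul_dvd_mul_iff_right hM0).mp hdvd
  obtain ⟨j, hj⟩ := h3k
  refine ⟨((g ^ j : Fˣ) : F), ?_⟩
  have heq : Units.mk0 z hz0 = (g ^ j) ^ 3 := by
    rw [← hk, hj, ← pow_mul, Nat.mul_comm]
  calc z = ((Units.mk0 z hz0 : Fˣ) : F) := rfl
    _ = (((g ^ j) ^ 3 : Fˣ) : F) := by rw [heq]
    _ = ((g ^ j : Fˣ) : F) ^ 3 := by push_cast; ring

theorem fermat_curve_cube_Fq3 {p r : ℕ} (hp : p.Prime) (hr : 0 < r) {q : ℕ} (hq : q = p ^ r)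
    {F : Type*} [Field F] [Fintype F] (hF : Fintype.card F = q ^ 3)
    (u v w : F) (h : u ^ (q - 1) + v ^ (q - 1) + w ^ (q - 1) = 0) :
    ∃ s : F, u * v * w = s ^ 3 := by
  have hq2 : 2 ≤ q := by
    rw [hq]; exact Nat.one_lt_pow (by omega) hp.one_lt
  rcases eq_or_ne u 0 with rfl | hu
  · exact ⟨0, by simp⟩
  rcases eq_or_ne v 0 with rfl | hv
  · exact ⟨0, by simp⟩
  rcases eq_or_ne w 0 with rfl | hw
  · exact ⟨0, by simp⟩
  have hq3q : q ≤ q ^ 3 := Nat.le_self_pow (by norm_num) q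
  by_cases h3 : 3 ∣ q - 1
  swap
  · -- easy case : 3 does not divide card F - 1
    apply cube_of_not_dvd
    rw [hF]
    intro hdvd
    have hm : q ^ 3 % 3 = (q % 3) ^ 3 % 3 := Nat.pow_mod q 3 3
    have h03 : q % 3 = 0 ∨ q % 3 = 1 ∨ q % 3 = 2 := by omega
    rcases h03 with h0 | h0 | h0 <;> rw [h0] at hm <;> norm_num at hm <;> omega
  · -- hard case
    obtain ⟨t, ht⟩ := h3
    have hqt : q = 3 * t + 1 := by omega
    have ht0 : 0 < t := by omega
    -- characteristic
    have hPrc := ringChar.charP F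
    have hprimerc : (ringChar F).Prime := CharP.char_is_prime F (ringChar F)
    obtain ⟨n, -, hn⟩ := FiniteField.card F (ringChar F)
    have hrc : ringChar F = p := by
      have h2 : (ringChar F) ^ (n : ℕ) = p ^ (r * 3) := by
        rw [← hn, hF, hq, ← pow_mul]
      have h1 : ringChar F ∣ p ^ (r * 3) := by
        rw [← h2]
        exact dvd_pow_self _ (by positivity)
      exact (Nat.prime_dvd_prime_iff_eq hprimerc hp).mp (hprimerc.dvd_of_dvd_pow h1)
    rw [hrc] at hPrc
    haveI : Fact p.Prime := ⟨hp⟩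
    haveI : CharP F p := hPrc
    have hfradd : ∀ a b : F, (a + b) ^ q = a ^ q + b ^ q := by
      intro a b; rw [hq]; exact add_pow_char_pow a b p r
    have hfrneg : ∀ a : F, (-a) ^ q = -(a ^ q) := by
      intro a
      rcases hp.eq_two_or_odd' with h2 | hodd
      · haveI : CharP F 2 := by rwa [h2] at hPrc
        rw [CharTwo.neg_eq, CharTwo.neg_eq]
      · have hoq : Odd q := by rw [hq]; exact hodd.pow
        exact hoq.neg_pow a
    -- main computation
    set x := u * w⁻¹ with hxdef
    set y := v * w⁻¹ with hydef
    have hx : x ≠ 0 := mul_ne_zero hu (inv_ne_zero hw)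
    have hy : y ≠ 0 := mul_ne_zero hv (inv_ne_zero hw)
    have hw1 : w ^ (q-1) ≠ 0 := pow_ne_zero _ hw
    have h1qq : 1 ≤ q * q := by simpa using Nat.mul_le_mul (show 1 ≤ q by omega) (show 1 ≤ q by omega)
    have hqqq : q ≤ q * q := Nat.le_mul_of_pos_left q (by omega)
    have h1 : x ^ (q-1) + y ^ (q-1) + 1 = 0 := by
      have hxe : x ^ (q-1) * w ^ (q-1) = u ^ (q-1) := by
        rw [hxdef, mul_pow, inv_pow, mul_assoc, inv_mul_cancel₀ hw1, mul_one]
      have hye : y ^ (q-1) * w ^ (q-1) = v ^ (q-1) := by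
        rw [hydef, mul_pow, inv_pow, mul_assoc, inv_mul_cancel₀ hw1, mul_one]
      apply mul_right_cancel₀ hw1
      rw [zero_mul]
      linear_combination h + hxe + hye
    have hx1eq : x * x ^ (q-1) = x ^ q := by
      rw [← pow_succ']
      congr 1
      omega
    have hstar : x * y ^ (q-1) = -(x + x ^ q) := by
      linear_combination x * h1 - hx1eq
    set b := y ^ (q-1) with hbdef
    set x1 := x ^ q with hx1def
    set x2 := x1 ^ q with hx2def
    set b1 := b ^ q with hb1def
    set b2 := b1 ^ q with hb2def
    have hx2q : x2 ^ q = x := by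
      have hcard : x ^ (q^3) = x := by rw [← hF]; exact FiniteField.pow_card x
      rw [hx2def, hx1def, ← pow_mul, ← pow_mul]
      convert hcard using 2
      ring
    have hstar1 : x1 * b1 = -(x1 + x2) := by
      calc x1 * b1 = (x * b) ^ q := by rw [hx1def, hb1def]; exact (mul_pow x b q).symm
        _ = (-(x + x1)) ^ q := by rw [hstar]
        _ = -((x + x1) ^ q) := hfrneg _
        _ = -(x1 + x2) := by rw [hfradd, ← hx1def, ← hx2def]
    have hstar2 : x2 * b2 = -(x2 + x) := by
      calc x2 * b2 = (x1 * b1) ^ q := by rw [hx2def, hb2def]; exact (mul_pow x1 b1 q).symm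
        _ = (-(x1 + x2)) ^ q := by rw [hstar1]
        _ = -((x1 + x2) ^ q) := hfrneg _
        _ = -(x2 + x) := by rw [hfradd, ← hx2def, hx2q]
    have hbbb : b * b1 * b2 = 1 := by
      have e1 : b * b1 * b2 = y ^ ((q-1) * (1 + q + q*q)) := by
        rw [hb2def, hb1def, hbdef, ← pow_mul, ← pow_mul, ← pow_add, ← pow_add]
        congr 1
        ring
      have e2 : (q-1) * (1 + q + q*q) = q^3 - 1 := by
        zify [show 1 ≤ q by omega, show 1 ≤ q^3 from Nat.one_le_pow _ _ (by omega)]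
        ring
      rw [e1, e2, ← hF]
      exact FiniteField.pow_card_sub_one_eq_one y hy
    have hprod : x * x1 * x2 = -((x + x1) * ((x1 + x2) * (x2 + x))) := by
      calc x * x1 * x2 = (x * x1 * x2) * (b * b1 * b2) := by rw [hbbb, mul_one]
        _ = (x * b) * ((x1 * b1) * (x2 * b2)) := by ring
        _ = (-(x + x1)) * ((-(x1 + x2)) * (-(x2 + x))) := by rw [hstar, hstar1, hstar2]
        _ = -((x + x1) * ((x1 + x2) * (x2 + x))) := by ring
    have he : (x + x1 + x2) * (x*x1 + x1*x2 + x2*x) = 0 := by linear_combination hprod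
    have hQ1 : Fintype.card F - 1 = 3 * ((q-1) * (3*t*t + 3*t + 1)) := by
      rw [hF, hqt]
      zify [show 1 ≤ (3*t+1)^3 from Nat.one_le_pow _ _ (by omega), show 1 ≤ 3*t+1 by omega]
      ring
    have hdvd3 : 3 ∣ Fintype.card F - 1 := ⟨_, hQ1⟩
    have hQdiv : (Fintype.card F - 1) / 3 = (q-1) * (3*t*t + 3*t + 1) := by
      rw [hQ1]
      exact Nat.mul_div_cancel_left _ (by norm_num)
    have hcube_aux : ∀ c : F, c ^ (q-1) = 1 → ∃ s : F, c = s ^ 3 := by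
      intro c hc
      apply cube_of_pow_eq_one hdvd3
      rw [hQdiv, pow_mul, hc, one_pow]
    have hx2e : x2 = x ^ (q*q) := by rw [hx2def, hx1def, ← pow_mul]
    rcases mul_eq_zero.mp he with h4 | h4
    · -- trace zero case
      have hc : x * b = x2 := by linear_combination hstar - h4
      have hb_eq : b = x ^ (q*q - 1) := by
        apply mul_left_cancel₀ hx
        rw [hc, hx2e, ← pow_succ']
        congr 1
        omega
      have hkey : (y * (x^(q+1))⁻¹) ^ (q-1) = 1 := by
        rw [mul_pow, inv_pow, ← pow_mul, ← hbdef,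
          show (q+1) * (q-1) = q*q - 1 by zify [show 1 ≤ q by omega, h1qq]; ring,
          hb_eq]
        exact mul_inv_cancel₀ (pow_ne_zero _ hx)
      obtain ⟨s0, hs0⟩ := hcube_aux _ hkey
      have e : x ^ (q+2) = x ^ (q+1) * x := by
        rw [show q+2 = (q+1)+1 by omega, pow_succ]
      have hxy : x * y = (y * (x^(q+1))⁻¹) * x^(q+2) := by
        rw [e]
        field_simp
      refine ⟨s0 * x ^ (t+1) * w, ?_⟩
      have hfin : (s0 * x^(t+1) * w)^3 = s0^3 * (x^(t+1))^3 * w^3 := by ring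
      rw [hfin, ← hs0, ← pow_mul, show (t+1)*3 = q+2 by omega, ← hxy,
        hxdef, hydef]
      field_simp
    · -- e2 = 0 case
      have hc : x2 * (x * b) = x * x1 := by linear_combination x2 * hstar - h4
      have hb2x : x ^ (q*q) * b = x ^ q := by
        apply mul_left_cancel₀ hx
        rw [← hx2e, ← hx1def]
        linear_combination hc
      have hkey : (y * x ^ q) ^ (q-1) = 1 := by
        rw [mul_pow, ← pow_mul, ← hbdef,
          show q * (q-1) = q*q - q by zify [show 1 ≤ q by omega, hqqq]; ring]
        apply mul_right_cancel₀ (pow_ne_zero q hx)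
        rw [one_mul, mul_assoc, ← pow_add, show q*q - q + q = q*q by omega, mul_comm b]
        exact hb2x
      obtain ⟨s0, hs0⟩ := hcube_aux _ hkey
      have hxq : x ^ q = x ^ (q-1) * x := by
        rw [← pow_succ]
        congr 1
        omega
      have hxy : x * y = (y * x ^ q) * (x ^ (3*t))⁻¹ := by
        rw [hxq, ← ht]
        field_simp
      refine ⟨s0 * (x ^ t)⁻¹ * w, ?_⟩
      have hfin : (s0 * (x ^ t)⁻¹ * w)^3 = s0^3 * ((x^t)^3)⁻¹ * w^3 := by ring
      rw [hfin, ← hs0, ← pow_mul, show t*3 = 3*t by ring, ← hxy, hxdef, hydef]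
      field_simp
end

section
/- Let q = p^r be a power of a prime p and let F_{q^2} denote the finite field with q^2 elements. If u, v ∈ F_{q^2} are both nonzero and satisfy u^{q-1} + v^{q-1} + 1 = 0, then v^{2(q-1)} + v^{q-1} + 1 = 0; consequently, if p ≠ 3 then v^{q-1} is a primitive cube root of unity (i.e., (v^{q-1})^3 = 1 and v^{q-1} ≠ 1), and if p = 3 then v^{q-1} = 1. -/
theorem fermat_curve_Fq2_necessary {p r : ℕ} (hp : p.Prime) (hr : 0 < r) {q : ℕ} (hq : q = p ^ r)
    {F : Type*} [Field F] [Fintype F] (hF : Fintype.card F = q ^ 2)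
    (u v : F) (hu : u ≠ 0) (hv : v ≠ 0)
    (h : u ^ (q - 1) + v ^ (q - 1) + 1 = 0) :
    v ^ (2 * (q - 1)) + v ^ (q - 1) + 1 = 0 ∧
      (p ≠ 3 → (v ^ (q - 1)) ^ 3 = 1 ∧ v ^ (q - 1) ≠ 1) ∧
      (p = 3 → v ^ (q - 1) = 1) := by
  -- characteristic of F is p
  have hq2 : 2 ≤ q := by
    rw [hq]
    calc 2 ≤ p := hp.two_le
    _ ≤ p ^ r := Nat.le_self_pow hr.ne' p
  have hcharP : CharP F p := by
    obtain ⟨c, hc⟩ := CharP.exists F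
    obtain ⟨n, hcp, hcard⟩ := FiniteField.card F c
    have : p ∣ c ^ (n : ℕ) := by
      rw [← hcard, hF, hq]
      rw [← pow_mul]
      exact dvd_pow_self p (by omega)
    have hpc : p = c := (Nat.prime_dvd_prime_iff_eq hp hcp).mp (hp.dvd_of_dvd_pow this)
    rwa [hpc]
  haveI := hcharP
  haveI : Fact p.Prime := ⟨hp⟩
  set a := u ^ (q - 1) with ha_def
  set b := v ^ (q - 1) with hb_def
  have ha : a ≠ 0 := pow_ne_zero _ hu
  have hb : b ≠ 0 := pow_ne_zero _ hv
  have hexp : (q - 1) * q + (q - 1) = q ^ 2 - 1 := by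
    have h1 : 1 ≤ q := by omega
    have h2 : 1 ≤ q ^ 2 := Nat.one_le_pow _ _ (by omega)
    zify [h1, h2]
    ring
  have hxq : ∀ x : F, x ≠ 0 → (x ^ (q - 1)) ^ q * (x ^ (q - 1)) = 1 := by
    intro x hx
    rw [← pow_mul, ← pow_add, hexp, ← hF]
    exact FiniteField.pow_card_sub_one_eq_one x hx
  have haq : a ^ q * a = 1 := hxq u hu
  have hbq : b ^ q * b = 1 := hxq v hv
  -- apply Frobenius (x ↦ x^q) to the equation h
  have hfrob : a ^ q + b ^ q + 1 = 0 := by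
    have : (a + b + 1) ^ q = a ^ q + b ^ q + 1 ^ q := by
      rw [hq, add_pow_char_pow, add_pow_char_pow]
    rw [h, zero_pow (by omega), one_pow] at this
    linear_combination -this
  -- a^q = a⁻¹, b^q = b⁻¹
  have haq' : a ^ q = a⁻¹ := by field_simp; exact haq
  have hbq' : b ^ q = b⁻¹ := by field_simp; exact hbq
  rw [haq', hbq'] at hfrob
  have key : b ^ 2 + b + 1 = 0 := by
    have ha' : a⁻¹ = -(b⁻¹ + 1) := by linear_combination hfrob
    have ha2 : a = -(b + 1) := by linear_combination h
    have h1 : a * a⁻¹ = 1 := mul_inv_cancel₀ ha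
    rw [ha', ha2] at h1
    have h2 : b * b⁻¹ = 1 := mul_inv_cancel₀ hb
    field_simp at h1
    linear_combination h1
  have h3 : b ^ 3 = 1 := by linear_combination (b - 1) * key
  refine ⟨?_, ?_, ?_⟩
  · rw [mul_comm, pow_mul]
    exact key
  · intro hp3
    refine ⟨h3, fun hb1 => ?_⟩
    rw [hb1] at key
    have : ((3 : ℕ) : F) = 0 := by push_cast; linear_combination key
    exact hp3 ((Nat.prime_dvd_prime_iff_eq hp Nat.prime_three).mp
      ((CharP.cast_eq_zero_iff F p 3).mp this))
  · intro hp3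
    subst hp3
    have h3' : ((3 : ℕ) : F) = 0 := (CharP.cast_eq_zero_iff F 3 3).mpr dvd_rfl
    push_cast at h3'
    have : (b - 1) ^ 2 = 0 := by linear_combination key - b * h3'
    exact sub_eq_zero.mp (pow_eq_zero_iff (n := 2) (by norm_num) |>.mp this)
end

section
/- Let q = p^r be a power of a prime p and let F_{q^2} denote the finite field with q^2 elements. For nonzero u, v ∈ F_{q^2}, the equation u^{q-1} + v^{q-1} + 1 = 0 holds if and only if either (q ≡ 2 (mod 3), v^{2(q-1)} + v^{q-1} + 1 = 0, and u = c·v^2 for some c ∈ F_{q^2} with c^q = c and c ≠ 0) or (p = 3, u^q = u, and v^q = v). -/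
theorem fermat_curve_Fq2_iff {p r : ℕ} (hp : p.Prime) (hr : 0 < r) {q : ℕ} (hq : q = p ^ r)
    {F : Type*} [Field F] [Fintype F] (hF : Fintype.card F = q ^ 2)
    (u v : F) (hu : u ≠ 0) (hv : v ≠ 0) :
    u ^ (q - 1) + v ^ (q - 1) + 1 = 0 ↔
      (q % 3 = 2 ∧ v ^ (2 * (q - 1)) + v ^ (q - 1) + 1 = 0 ∧
        ∃ c : F, c ^ q = c ∧ c ≠ 0 ∧ u = c * v ^ 2) ∨
      (p = 3 ∧ u ^ q = u ∧ v ^ q = v) := by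
  haveI := Fact.mk hp
  have hq2 : 2 ≤ q := by
    rw [hq]; calc 2 ≤ p := hp.two_le
    _ ≤ p ^ r := Nat.le_self_pow hr.ne' p
  have hsub1 : q - 1 + 1 = q := by omega
  -- characteristic of F is p
  have hchar : CharP F p := by
    set p' := ringChar F with hp'
    haveI : CharP F p' := ringChar.charP F
    obtain ⟨n, hp'p, hcard'⟩ := FiniteField.card F p'
    have hdvd : p' ∣ p ^ (r * 2) := by
      rw [pow_mul, ← hq, ← hF, hcard']
      exact dvd_pow_self p' n.2.ne'
    have : p' = p := (Nat.prime_dvd_prime_iff_eq hp'p hp).mp (hp'p.dvd_of_dvd_pow hdvd)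
    rw [← this]; infer_instance
  haveI : ExpChar F p := ExpChar.prime hp
  set φ := iterateFrobenius F p r with hφdef
  have hφ : ∀ x : F, φ x = x ^ q := by
    intro x; rw [hφdef, iterateFrobenius_def, hq]
  have hm : (q - 1) * (q + 1) = Fintype.card F - 1 := by
    rw [hF]
    have h1 : q ^ 2 = q * q := sq q
    obtain ⟨k, hk⟩ : ∃ k, q = k + 1 := ⟨q - 1, by omega⟩
    subst hk
    have h2 : (k + 1) * (k + 1) = k * k + 2 * k + 1 := by ring
    have h3 : (k + 1 - 1) * (k + 1 + 1) = k * k + 2 * k := by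
      rw [Nat.add_sub_cancel]; ring
    omega
  constructor
  · intro h
    set a := u ^ (q - 1) with haa
    set b := v ^ (q - 1) with hbb
    have ha0 : a ≠ 0 := pow_ne_zero _ hu
    have hb0 : b ≠ 0 := pow_ne_zero _ hv
    have ha1 : a ^ (q + 1) = 1 := by
      rw [haa, ← pow_mul, hm]; exact FiniteField.pow_card_sub_one_eq_one u hu
    have hb1 : b ^ (q + 1) = 1 := by
      rw [hbb, ← pow_mul, hm]; exact FiniteField.pow_card_sub_one_eq_one v hv
    have hbq : b = -1 - a := by linear_combination h
    have hφb : b ^ q = -1 - a ^ q := by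
      rw [← hφ b, hbq, map_sub, map_neg, map_one, hφ a]
    have e1 : b ^ q * b = 1 := by rw [← pow_succ]; exact hb1
    have e2 : a ^ q * a = 1 := by rw [← pow_succ]; exact ha1
    rw [hφb, hbq] at e1
    have hab : a ^ q = b := by linear_combination e1 - e2 - hbq
    have hmul : a * b = 1 := by linear_combination e2 - a * hab
    have haa2 : a ^ 2 + a + 1 = 0 := by linear_combination a * h - hmul
    by_cases hp3 : p = 3
    · right
      haveI : CharP F 3 := hp3 ▸ hchar
      have h3 : (3 : F) = 0 := by exact_mod_cast CharP.cast_eq_zero F 3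
      have ha1' : a = 1 := by
        have hsq : (a - 1) ^ 2 = 0 := by linear_combination haa2 - a * h3
        exact sub_eq_zero.mp ((pow_eq_zero_iff two_ne_zero).mp hsq)
      have hb1' : b = 1 := by linear_combination h - ha1' - h3
      refine ⟨hp3, ?_, ?_⟩
      · calc u ^ q = u ^ (q - 1) * u := by rw [← pow_succ, hsub1]
          _ = u := by rw [← haa, ha1', one_mul]
      · calc v ^ q = v ^ (q - 1) * v := by rw [← pow_succ, hsub1]
          _ = v := by rw [← hbb, hb1', one_mul]
    · left
      have hane : a ≠ 1 := by
        intro he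
        apply hp3
        have h3 : (3 : F) = 0 := by linear_combination haa2 - (a + 2) * he
        have : (p : ℕ) ∣ 3 := by
          have := (CharP.cast_eq_zero_iff F p 3).mp (by exact_mod_cast h3)
          exact_mod_cast this
        exact (Nat.prime_dvd_prime_iff_eq hp Nat.prime_three).mp this
      have ha3 : a ^ 3 = 1 := by linear_combination (a - 1) * haa2
      have hord : orderOf a = 3 := by
        have hd := orderOf_dvd_of_pow_eq_one ha3
        rcases (Nat.dvd_prime Nat.prime_three).mp hd with h1 | h1
        · exact absurd (orderOf_eq_one_iff.mp h1) hane
        · exact h1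
      have hdvd3 : 3 ∣ q + 1 := hord ▸ orderOf_dvd_of_pow_eq_one ha1
      have hq3 : q % 3 = 2 := by obtain ⟨k, hk⟩ := hdvd3; omega
      have hb2 : b = a ^ 2 := by
        have h1 : a * b = a * a ^ 2 := by
          rw [hmul]; linear_combination -ha3
        exact mul_left_cancel₀ ha0 h1
      have hab2 : a = b ^ 2 := by
        rw [hb2]; linear_combination -a * ha3
      refine ⟨hq3, ?_, u * (v ^ 2)⁻¹, ?_, mul_ne_zero hu (inv_ne_zero (pow_ne_zero _ hv)), by field_simp⟩
      · have hvq : v ^ (2 * (q - 1)) = b ^ 2 := by rw [mul_comm, pow_mul]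
        rw [hvq]
        linear_combination b ^ 2 * haa2 - (a * b + b + 1) * hmul
      · have hv2q : (v ^ 2) ^ (q - 1) = b ^ 2 := by
          rw [← pow_mul, mul_comm, pow_mul]
        have hc1 : (u * (v ^ 2)⁻¹) ^ (q - 1) = 1 := by
          rw [mul_pow, inv_pow, hv2q, ← haa, ← hab2]
          exact mul_inv_cancel₀ ha0
        calc (u * (v ^ 2)⁻¹) ^ q = (u * (v ^ 2)⁻¹) ^ (q - 1) * (u * (v ^ 2)⁻¹) := by
              rw [← pow_succ, hsub1]
          _ = u * (v ^ 2)⁻¹ := by rw [hc1, one_mul]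
  · rintro (⟨hq3, hv2, c, hcq, hc0, huc⟩ | ⟨hp3, huq, hvq⟩)
    · have hc1 : c ^ (q - 1) = 1 := by
        have h1 : c ^ (q - 1) * c = 1 * c := by
          rw [← pow_succ, hsub1, one_mul]; exact hcq
        exact mul_right_cancel₀ hc0 h1
      have hu1 : u ^ (q - 1) = v ^ (2 * (q - 1)) := by
        rw [huc, mul_pow, hc1, one_mul, ← pow_mul]
      rw [hu1]; exact hv2
    · haveI : CharP F 3 := hp3 ▸ hchar
      have h3 : (3 : F) = 0 := by exact_mod_cast CharP.cast_eq_zero F 3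
      have hu1 : u ^ (q - 1) = 1 := by
        have h1 : u ^ (q - 1) * u = 1 * u := by
          rw [← pow_succ, hsub1, one_mul]; exact huq
        exact mul_right_cancel₀ hu h1
      have hv1 : v ^ (q - 1) = 1 := by
        have h1 : v ^ (q - 1) * v = 1 * v := by
          rw [← pow_succ, hsub1, one_mul]; exact hvq
        exact mul_right_cancel₀ hv h1
      rw [hu1, hv1]; linear_combination h3
end

section
/- Let q = p^r be a power of a prime p and let F_{q^3} denote the finite field with q^3 elements. Define T(X) := X^{q^2} + X^q + X. For nonzero u, v ∈ F_{q^3}, the equation u^{q-1} + v^{q-1} + 1 = 0 holds if and only if there exists c ∈ F_{q^3} with c^q = c and c ≠ 0 such that either (T(v) = 0 and u = c·v^{q+1}) or (T(v^{-1}) = 0 and u = c·v^{-q}). -/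
theorem fermat_curve_Fq3_iff {p r : ℕ} (hp : p.Prime) (hr : 0 < r) {q : ℕ} (hq : q = p ^ r)
    {F : Type*} [Field F] [Fintype F] (hF : Fintype.card F = q ^ 3)
    (u v : F) (hu : u ≠ 0) (hv : v ≠ 0) :
    u ^ (q - 1) + v ^ (q - 1) + 1 = 0 ↔
      ∃ c : F, c ^ q = c ∧ c ≠ 0 ∧
        ((v ^ (q ^ 2) + v ^ q + v = 0 ∧ u = c * v ^ (q + 1)) ∨
         ((v⁻¹) ^ (q ^ 2) + (v⁻¹) ^ q + v⁻¹ = 0 ∧ u = c * (v⁻¹) ^ q)) := by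
  have hq1 : 1 ≤ q := by subst hq; exact Nat.one_le_pow _ _ hp.pos
  have hq0 : q ≠ 0 := by omega
  have hcard : Fintype.card F = p ^ (3 * r) := by rw [hF, hq, ← pow_mul, mul_comm]
  haveI : CharP F p := by
    have hrc := ringChar.charP F
    obtain ⟨n, hprime, hcn⟩ := FiniteField.card F (ringChar F)
    have hdvd : p ∣ ringChar F :=
      hp.dvd_of_dvd_pow (n := (n : ℕ))
        (by rw [← hcn, hcard]; exact dvd_pow_self p (by positivity))
    have hpp : p = ringChar F := (Nat.prime_dvd_prime_iff_eq hp hprime).mp hdvd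
    rw [hpp]; exact hrc
  haveI : Fact p.Prime := ⟨hp⟩
  -- basic tools
  have frob : ∀ x y : F, (x + y) ^ q = x ^ q + y ^ q := by
    intro x y; rw [hq]; exact add_pow_char_pow x y p r
  have frobneg : ∀ x : F, (-x) ^ q = -(x ^ q) := by
    intro x
    have h := sub_pow_char_pow (R := F) (x := 0) (y := x) (p := p) (n := r)
    rw [← hq] at h
    simpa [zero_pow hq0] using h
  have pow_pred : ∀ (n : ℕ), 1 ≤ n → ∀ x : F, x ^ (n - 1) * x = x ^ n := by
    intro n hn x; rw [← pow_succ]; congr 1; omega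
  have powcard : ∀ x : F, x ^ q ^ 3 = x := by
    intro x; rw [← hF]; exact FiniteField.pow_card x
  have hbb : (v ^ q) ^ q = v ^ q ^ 2 := by rw [← pow_mul, ← pow_two]
  have hdd : (v ^ q ^ 2) ^ q = v := by rw [← pow_mul, ← pow_succ]; exact powcard v
  have hb : q ≤ q ^ 2 := by nlinarith
  have hc : q ^ 2 ≤ q ^ 3 := by nlinarith
  have h1q3 : 1 ≤ q ^ 3 := by omega
  have e1 : (q - 1) * q = q ^ 2 - q := by rw [Nat.sub_mul, one_mul, ← pow_two]
  have e2 : (q ^ 2 - q) * q = q ^ 3 - q ^ 2 := by rw [Nat.sub_mul, ← pow_succ, ← pow_two]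
  have e3 : q - 1 + (q ^ 2 - q) + (q ^ 3 - q ^ 2) = q ^ 3 - 1 := by
    zify [hq1, hb, hc, h1q3]; ring
  have eq4 : (q + 1) * (q - 1) + 1 = q ^ 2 := by
    obtain ⟨m, rfl⟩ := Nat.exists_eq_add_of_le hq1
    simp only [Nat.add_sub_cancel_left]; ring
  constructor
  · intro h
    have hA : u ^ (q - 1) * v = -(v ^ q + v) := by
      rw [← pow_pred q hq1 v]; linear_combination v * h
    have hA2 : u ^ (q ^ 2 - q) * v ^ q = -(v ^ q ^ 2 + v ^ q) := by
      have h2 := congrArg (· ^ q) hA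
      simp only [mul_pow] at h2
      rw [← pow_mul, e1, frobneg, frob, hbb] at h2
      exact h2
    have hA3 : u ^ (q ^ 3 - q ^ 2) * v ^ q ^ 2 = -(v + v ^ q ^ 2) := by
      have h3 := congrArg (· ^ q) hA2
      simp only [mul_pow] at h3
      rw [← pow_mul, e2, frobneg, frob, hbb, hdd] at h3
      exact h3
    have hu3 : u ^ (q ^ 3 - 1) = 1 := by
      have h1 : u ^ (q ^ 3 - 1) * u = 1 * u := by
        rw [pow_pred _ h1q3 u, powcard u, one_mul]
      exact mul_right_cancel₀ hu h1
    have hprod : v * v ^ q * v ^ q ^ 2 =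
        -((v ^ q + v) * (v ^ q ^ 2 + v ^ q) * (v + v ^ q ^ 2)) := by
      have hmul : (u ^ (q - 1) * v) * (u ^ (q ^ 2 - q) * v ^ q) *
          (u ^ (q ^ 3 - q ^ 2) * v ^ q ^ 2) =
          (-(v ^ q + v)) * (-(v ^ q ^ 2 + v ^ q)) * (-(v + v ^ q ^ 2)) := by
        rw [hA, hA2, hA3]
      have hre : (u ^ (q - 1) * v) * (u ^ (q ^ 2 - q) * v ^ q) *
          (u ^ (q ^ 3 - q ^ 2) * v ^ q ^ 2) =
          u ^ (q - 1 + (q ^ 2 - q) + (q ^ 3 - q ^ 2)) * (v * v ^ q * v ^ q ^ 2) := by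
        rw [pow_add, pow_add]; ring
      rw [hre, e3, hu3, one_mul] at hmul
      linear_combination hmul
    have hfact : (v ^ q ^ 2 + v ^ q + v) *
        (v * v ^ q + v ^ q * v ^ q ^ 2 + v ^ q ^ 2 * v) = 0 := by
      linear_combination hprod
    rcases mul_eq_zero.mp hfact with hT | hE2
    · -- case T(v) = 0
      have hv1 : v ^ (q + 1) ≠ 0 := pow_ne_zero _ hv
      have key : u ^ (q - 1) = (v ^ (q + 1)) ^ (q - 1) := by
        apply mul_right_cancel₀ hv
        rw [hA]
        have h2 : (v ^ (q + 1)) ^ (q - 1) * v = v ^ q ^ 2 := by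
          rw [← pow_mul, ← pow_succ, eq4]
        rw [h2]; linear_combination -hT
      refine ⟨u * (v ^ (q + 1))⁻¹, ?_, mul_ne_zero hu (inv_ne_zero hv1),
        Or.inl ⟨hT, by rw [mul_assoc, inv_mul_cancel₀ hv1, mul_one]⟩⟩
      have hc1 : (u * (v ^ (q + 1))⁻¹) ^ (q - 1) = 1 := by
        rw [mul_pow, key, inv_pow, mul_inv_cancel₀ (pow_ne_zero _ hv1)]
      rw [← pow_pred q hq1, hc1, one_mul]
    · -- case T(v⁻¹) = 0
      have hvq : v ^ q ≠ 0 := pow_ne_zero _ hv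
      have hTi : (v⁻¹) ^ q ^ 2 + (v⁻¹) ^ q + v⁻¹ = 0 := by
        have f2 : (v⁻¹) ^ q ^ 2 * v ^ q ^ 2 = 1 := by
          rw [← mul_pow, inv_mul_cancel₀ hv, one_pow]
        have f1 : (v⁻¹) ^ q * v ^ q = 1 := by
          rw [← mul_pow, inv_mul_cancel₀ hv, one_pow]
        have f0 : v⁻¹ * v = 1 := inv_mul_cancel₀ hv
        have key' : ((v⁻¹) ^ q ^ 2 + (v⁻¹) ^ q + v⁻¹) * (v * v ^ q * v ^ q ^ 2) = 0 := by
          linear_combination hE2 + v * v ^ q * f2 + v * v ^ q ^ 2 * f1 +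
            v ^ q * v ^ q ^ 2 * f0
        rcases mul_eq_zero.mp key' with h' | h'
        · exact h'
        · exact absurd h' (mul_ne_zero (mul_ne_zero hv hvq) (pow_ne_zero _ hv))
      have key2 : u ^ (q - 1) * (v ^ q) ^ (q - 1) = 1 := by
        have hbq : (v ^ q) ^ (q - 1) * v ^ q = v ^ q ^ 2 := by
          rw [pow_pred q hq1 (v ^ q), hbb]
        have h1 : u ^ (q - 1) * (v ^ q) ^ (q - 1) * (v * v ^ q) = 1 * (v * v ^ q) := by
          calc u ^ (q - 1) * (v ^ q) ^ (q - 1) * (v * v ^ q)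
              = (u ^ (q - 1) * v) * ((v ^ q) ^ (q - 1) * v ^ q) := by ring
            _ = -(v ^ q + v) * v ^ q ^ 2 := by rw [hA, hbq]
            _ = 1 * (v * v ^ q) := by linear_combination -hE2
        exact mul_right_cancel₀ (mul_ne_zero hv hvq) h1
      refine ⟨u * v ^ q, ?_, mul_ne_zero hu hvq,
        Or.inr ⟨hTi, by rw [inv_pow, mul_assoc, mul_inv_cancel₀ hvq, mul_one]⟩⟩
      rw [← pow_pred q hq1, mul_pow, key2, one_mul]
  · rintro ⟨c, hcq, hc0, hcase⟩
    have hc1 : c ^ (q - 1) = 1 := by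
      have h1 : c ^ (q - 1) * c = 1 * c := by rw [pow_pred q hq1 c, hcq, one_mul]
      exact mul_right_cancel₀ hc0 h1
    rcases hcase with ⟨hT, hue⟩ | ⟨hT, hue⟩
    · subst hue
      have key : ((c * v ^ (q + 1)) ^ (q - 1) + v ^ (q - 1) + 1) * v = 0 := by
        rw [mul_pow, hc1, one_mul]
        have h2 : (v ^ (q + 1)) ^ (q - 1) * v = v ^ q ^ 2 := by
          rw [← pow_mul, ← pow_succ, eq4]
        have h3 := pow_pred q hq1 v
        linear_combination hT + h2 + h3
      rcases mul_eq_zero.mp key with h' | h'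
      · exact h'
      · exact absurd h' hv
    · subst hue
      have hvi : v⁻¹ ≠ 0 := inv_ne_zero hv
      have key : ((c * (v⁻¹) ^ q) ^ (q - 1) + v ^ (q - 1) + 1) * ((v⁻¹) ^ q * v) = 0 := by
        rw [mul_pow, hc1, one_mul]
        have h2 : ((v⁻¹) ^ q) ^ (q - 1) * (v⁻¹) ^ q = (v⁻¹) ^ q ^ 2 := by
          rw [pow_pred q hq1, ← pow_mul, ← pow_two]
        have h3 := pow_pred q hq1 v
        have h4 : v ^ q * (v⁻¹) ^ q = 1 := by
          rw [← mul_pow, mul_inv_cancel₀ hv, one_pow]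
        have h5 : v * v⁻¹ = 1 := mul_inv_cancel₀ hv
        linear_combination v * hT + v * h2 + (v⁻¹) ^ q * h3 + h4 - h5
      rcases mul_eq_zero.mp key with h' | h'
      · exact h'
      · exact absurd h' (mul_ne_zero (pow_ne_zero _ hvi) hv)
end

section
/- Let q = p^r be a power of a prime p and let F_{q^3} denote the finite field with q^3 elements. Define T(X) := X^{q^2} + X^q + X. If u, v ∈ F_{q^3} are both nonzero and satisfy u^{q-1} + v^{q-1} + 1 = 0, then T(v) · T(v^{-1}) = 0, i.e., T(v) = 0 or T(v^{-1}) = 0. -/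
theorem fermat_curve_Fq3_necessary {p r : ℕ} (hp : p.Prime) (hr : 0 < r) {q : ℕ} (hq : q = p ^ r)
    {F : Type*} [Field F] [Fintype F] (hF : Fintype.card F = q ^ 3)
    (u v : F) (hu : u ≠ 0) (hv : v ≠ 0)
    (h : u ^ (q - 1) + v ^ (q - 1) + 1 = 0) :
    (v ^ (q ^ 2) + v ^ q + v) * ((v⁻¹) ^ (q ^ 2) + (v⁻¹) ^ q + v⁻¹) = 0 := by
  have hq2 : 2 ≤ q := by
    rw [hq]; exact Nat.one_lt_pow hr.ne' hp.one_lt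
  obtain ⟨n, hn⟩ : ∃ n, q = n + 1 := ⟨q - 1, by omega⟩
  -- characteristic
  have hcp : CharP F (ringChar F) := ringChar.charP F
  have hpr : (ringChar F).Prime := CharP.char_is_prime F (ringChar F)
  obtain ⟨m, -, hm⟩ := FiniteField.card F (ringChar F)
  have hrc : ringChar F = p := by
    have he : ringChar F ^ (m : ℕ) = p ^ (3 * r) := by
      rw [← hm, hF, hq, ← pow_mul, Nat.mul_comm]
    have hd : ringChar F ∣ p ^ (3 * r) := by
      rw [← he]; exact dvd_pow_self _ m.pos.ne'
    exact (Nat.prime_dvd_prime_iff_eq hpr hp).mp (hpr.dvd_of_dvd_pow hd)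
  rw [hrc] at hcp
  haveI := hcp
  haveI : Fact p.Prime := ⟨hp⟩
  have frob : ∀ x y : F, (x + y) ^ q = x ^ q + y ^ q := by
    intro x y; rw [hq]; exact add_pow_char_pow ..
  have frobneg : ∀ x : F, (-x) ^ q = -(x ^ q) := by
    intro x
    have : ((0 : F) - x) ^ q = 0 ^ q - x ^ q := by rw [hq]; exact sub_pow_char_pow ..
    simpa [zero_pow (by omega : q ≠ 0)] using this
  have hv1 : v ^ (q ^ 3 - 1) = 1 := by
    have := FiniteField.pow_card_sub_one_eq_one v hv
    rwa [hF] at this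
  have hu1 : u ^ (q ^ 3 - 1) = 1 := by
    have := FiniteField.pow_card_sub_one_eq_one u hu
    rwa [hF] at this
  have hexp : (q - 1) * (q ^ 2 + q + 1) = q ^ 3 - 1 := by
    apply Nat.eq_sub_of_add_eq
    subst hn; simp; ring
  obtain ⟨b, hb⟩ : ∃ x : F, x = v ^ (q - 1) := ⟨_, rfl⟩
  obtain ⟨a, ha⟩ : ∃ x : F, x = u ^ (q - 1) := ⟨_, rfl⟩
  rw [← ha, ← hb] at h
  have hNb : b ^ (q ^ 2 + q + 1) = 1 := by rw [hb, ← pow_mul, hexp]; exact hv1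
  have hNa : a ^ (q ^ 2 + q + 1) = 1 := by rw [ha, ← pow_mul, hexp]; exact hu1
  obtain ⟨B1, hB1⟩ : ∃ x : F, x = b ^ q := ⟨_, rfl⟩
  obtain ⟨B2, hB2⟩ : ∃ x : F, x = B1 ^ q := ⟨_, rfl⟩
  have hsplit : ∀ x : F, x ^ (q ^ 2 + q + 1) = ((x ^ q) ^ q) * x ^ q * x := by
    intro x; rw [pow_add, pow_add, pow_one, pow_two, pow_mul]
  have keyN : ((b ^ q) ^ q) * b ^ q * b = 1 := by rw [← hsplit]; exact hNb
  rw [← hB1] at keyN; rw [← hB2] at keyN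
  have ha' : a = -(b + 1) := by linear_combination h
  have haq : a ^ q = -(B1 + 1) := by rw [ha', frobneg, frob, one_pow, ← hB1]
  have haq2 : (a ^ q) ^ q = -(B2 + 1) := by rw [haq, frobneg, frob, one_pow, ← hB2]
  have key1 : (b + 1) * (B1 + 1) * (B2 + 1) = -1 := by
    have e := hNa
    rw [hsplit a, haq2, haq, ha'] at e
    linear_combination -e
  have hbne : b ≠ 0 := by rw [hb]; exact pow_ne_zero _ hv
  have hB1ne : B1 ≠ 0 := by rw [hB1]; exact pow_ne_zero _ hbne
  have hA : v ^ (q ^ 2) = v * b * B1 := by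
    rw [hB1, hb, ← pow_mul, mul_assoc, ← pow_add, ← pow_succ', ]
    congr 1
    subst hn; simp; ring
  have hB : v ^ q = v * b := by
    rw [hb, ← pow_succ']
    congr 1; omega
  rw [inv_pow, inv_pow, hA, hB]
  field_simp
  linear_combination (b * B1) * key1 - ((b + 1) * (B1 + 1)) * keyN
end

section
/- Let q = p^r be a power of a prime p and let F_{q^3} denote the finite field with q^3 elements. If V ∈ F_{q^3} is nonzero and satisfies V^{q^2+q+1} = 1, then (V + 1)^{q^2+q+1} + 1 = (V^{q+1} + V + 1) · (V^{-q-1} + V^{-1} + 1). -/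
theorem fermat_unexpected_factorization {p r : ℕ} (hp : p.Prime) (hr : 0 < r) {q : ℕ}
    (hq : q = p ^ r)
    {F : Type*} [Field F] [Fintype F] (hF : Fintype.card F = q ^ 3)
    (V : F) (hV : V ≠ 0) (hnorm : V ^ (q ^ 2 + q + 1) = 1) :
    (V + 1) ^ (q ^ 2 + q + 1) + 1 =
      (V ^ (q + 1) + V + 1) * ((V⁻¹) ^ (q + 1) + V⁻¹ + 1) := by
  -- the characteristic is p
  have hcard : Fintype.card F = p ^ (r * 3) := by rw [hF, hq, ← pow_mul]
  haveI : CharP F (ringChar F) := ringChar.charP F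
  obtain ⟨n, hcprime, hcn⟩ := FiniteField.card F (ringChar F)
  have hcp : ringChar F = p := by
    have hdvd : ringChar F ∣ p ^ (r * 3) := by
      rw [← hcard, hcn]; exact dvd_pow_self _ n.ne_zero
    exact (Nat.prime_dvd_prime_iff_eq hcprime hp).mp (hcprime.dvd_of_dvd_pow hdvd)
  haveI : CharP F p := hcp ▸ ringChar.charP F
  haveI : ExpChar F p := ExpChar.prime hp
  have hfrob : ∀ x y : F, (x + y) ^ q = x ^ q + y ^ q := by
    intro x y; rw [hq]; exact add_pow_expChar_pow ..

  set a := V ^ q with ha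
  set b := V ^ (q ^ 2) with hb
  have hba : b = a ^ q := by rw [ha, hb, ← pow_mul, sq]
  have hrel : b * (a * V) = 1 := by
    rw [ha, hb, ← pow_succ, ← pow_add]
    simpa [add_assoc] using hnorm
  have hVinv : V⁻¹ = a * b := by
    refine (eq_inv_of_mul_eq_one_left ?_).symm
    linear_combination hrel
  have hVq1 : V ^ (q + 1) = a * V := by rw [pow_add, pow_one, ha]
  have hVinvq1 : (V⁻¹) ^ (q + 1) = b := by
    rw [inv_pow]
    refine inv_eq_of_mul_eq_one_left ?_
    rw [hVq1]
    linear_combination hrel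
  have h1 : (V + 1) ^ q = a + 1 := by rw [hfrob, one_pow, ha]
  have hL : (V + 1) ^ (q ^ 2 + q + 1) = (b + 1) * ((a + 1) * (V + 1)) := by
    have h2 : (V + 1) ^ q ^ 2 = b + 1 := by
      rw [sq, pow_mul, h1, hfrob, one_pow, ← hba]
    rw [pow_add, pow_add, pow_one, h1, h2]
    ring
  rw [hL, hVq1, hVinvq1, hVinv]
  linear_combination (-(a + 1)) * hrel
end

section
/- Let q = p^r be a power of a prime p and let F_{q^2} denote the finite field with q^2 elements. The number of triples (u, v, w) ∈ F_{q^2}^3 with (u, v, w) ≠ (0, 0, 0) and u^{q-1} + v^{q-1} + w^{q-1} = 0 equals (q^2 - 1)·N, where N = 3(q-1) if q ≡ 1 (mod 3); N = 3(q-1) + (q-1)^2 if q ≡ 0 (mod 3); and N = 3(q-1) + 2(q-1)^2 if q ≡ 2 (mod 3). -/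
open Finset Polynomial

lemma qmul {q : ℕ} (hq2 : 2 ≤ q) : q ^ 2 - 1 = (q - 1) * (q + 1) := by
  obtain ⟨k, rfl⟩ : ∃ k, q = k + 2 := ⟨q - 2, by omega⟩
  have h : (k + 2) ^ 2 = k * k + 4 * k + 4 := by ring
  have h2 : (k + 2 - 1) * (k + 2 + 1) = k * k + 4 * k + 3 := by
    have e : k + 2 - 1 = k + 1 := rfl
    rw [e]; ring
  omega

section
variable {F : Type*} [Field F] [Fintype F] {q : ℕ} (hq2 : 2 ≤ q) (hF : Fintype.card F = q ^ 2)
variable [DecidableEq F]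
include hq2 hF

lemma pow_q2 (x : F) (hx : x ≠ 0) : (x ^ (q - 1)) ^ (q + 1) = 1 := by
  rw [← pow_mul]
  have h1 : (q - 1) * (q + 1) = q ^ 2 - 1 := (qmul hq2).symm
  rw [h1, ← hF, FiniteField.pow_card_sub_one_eq_one x hx]

lemma nle (a : F) : (univ.filter fun x : F => x ^ (q - 1) = a).card ≤ q - 1 := by
  calc (univ.filter fun x : F => x ^ (q - 1) = a).card
      ≤ (nthRoots (q - 1) a).toFinset.card := by
        apply card_le_card
        intro x hx
        simp only [mem_filter, mem_univ, true_and] at hx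
        simp [Multiset.mem_toFinset, mem_nthRoots (by omega : 0 < q - 1), hx]
    _ ≤ Multiset.card (nthRoots (q - 1) a) := Multiset.toFinset_card_le _
    _ ≤ q - 1 := card_nthRoots _ _

lemma rootcount' {n : ℕ} (hn : 0 < n) (hd : n ∣ q ^ 2 - 1) :
    (univ.filter fun x : F => x ^ n = 1).card = n := by
  obtain ⟨g, hg⟩ := IsCyclic.exists_ofOrder_eq_natCard (α := Fˣ)
  have hcard : Nat.card Fˣ = Fintype.card F - 1 := by
    rw [Nat.card_eq_fintype_card, Fintype.card_units]
  have hprim : IsPrimitiveRoot (g : F) (Fintype.card F - 1) := by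
    rw [← hcard, ← hg]
    have := IsPrimitiveRoot.orderOf (g : F)
    rwa [orderOf_units] at this
  rw [hF] at hprim
  obtain ⟨m, hm⟩ := hd
  have hprim' : IsPrimitiveRoot ((g : F) ^ m) n :=
    hprim.pow (Nat.sub_pos_of_lt (one_lt_pow₀ (by omega) two_ne_zero)) (by rw [hm, mul_comm])
  have he : (univ.filter fun x : F => x ^ n = 1) = nthRootsFinset n (1 : F) := by
    ext x; simp [mem_nthRootsFinset hn]
  rw [he, hprim'.card_nthRootsFinset]

lemma mucard : (univ.filter fun a : F => a ^ (q + 1) = 1).card = q + 1 :=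
  rootcount' hq2 hF (by omega) ⟨q - 1, by rw [qmul hq2, mul_comm]⟩

lemma mu_ne_zero {a : F} (ha : a ^ (q + 1) = 1) : a ≠ 0 := by
  rintro rfl
  rw [zero_pow (by omega : q + 1 ≠ 0)] at ha
  exact zero_ne_one ha

lemma nmu {a : F} (ha : a ^ (q + 1) = 1) :
    (univ.filter fun x : F => x ^ (q - 1) = a).card = q - 1 := by
  set μ : Finset F := univ.filter fun b : F => b ^ (q + 1) = 1 with hμ
  have hfib : (univ.filter fun x : F => x ≠ 0).card
      = ∑ b ∈ μ, ((univ.filter fun x : F => x ≠ 0).filter fun x => x ^ (q - 1) = b).card := by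
    apply card_eq_sum_card_fiberwise
    intro x hx
    simp only [hμ, mem_coe, mem_filter, mem_univ, true_and] at hx ⊢
    exact pow_q2 hq2 hF x hx
  have hfib2 : ∀ b ∈ μ, ((univ.filter fun x : F => x ≠ 0).filter fun x => x ^ (q - 1) = b).card
      = (univ.filter fun x : F => x ^ (q - 1) = b).card := by
    intro b hb
    congr 1
    ext x
    simp only [mem_filter, mem_univ, true_and, filter_filter]
    constructor
    · rintro ⟨-, h⟩; exact h
    · intro h
      refine ⟨?_, h⟩
      rintro rfl
      rw [zero_pow (by omega : q - 1 ≠ 0)] at h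
      exact mu_ne_zero hq2 hF (mem_filter.mp hb).2 h.symm
  have hcardne : (univ.filter fun x : F => x ≠ 0).card = q ^ 2 - 1 := by
    rw [filter_ne', card_erase_of_mem (mem_univ 0), card_univ, hF]
  rw [Finset.sum_congr rfl hfib2] at hfib
  have hsum : ∑ b ∈ μ, (univ.filter fun x : F => x ^ (q - 1) = b).card
      = ∑ b ∈ μ, (q - 1) := by
    rw [← hfib, hcardne, Finset.sum_const, smul_eq_mul, mucard hq2 hF, qmul hq2, mul_comm]
  have := (Finset.sum_eq_sum_iff_of_le (fun b _ => nle hq2 hF b)).mp hsum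
  exact this a (by simp [hμ, ha])

end
section
variable {F : Type*} [Field F] [Fintype F] {p r q : ℕ} (hp : p.Prime) (hr : 0 < r)
  (hq : q = p ^ r) (hF : Fintype.card F = q ^ 2)
variable [DecidableEq F]
include hp hr hq hF

lemma charF : CharP F p := by
  obtain ⟨n, hprime, hcard⟩ := FiniteField.card F (ringChar F)
  have hdvd : ringChar F ∣ p ^ (r * 2) := by
    rw [pow_mul, ← hq, ← hF, hcard]
    exact dvd_pow_self _ (by positivity)
  have : ringChar F = p :=
    (Nat.prime_dvd_prime_iff_eq hprime hp).mp (hprime.dvd_of_dvd_pow hdvd)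
  exact this ▸ ringChar.charP F

lemma frobF (x : F) : (1 + x) ^ q = 1 + x ^ q := by
  haveI := charF hp hr hq hF
  haveI : Fact p.Prime := ⟨hp⟩
  rw [hq, add_pow_char_pow, one_pow]

lemma hq2' : 2 ≤ q := by
  rw [hq]
  calc 2 = 2 ^ 1 := rfl
  _ ≤ p ^ r := Nat.pow_le_pow_left hp.two_le r |>.trans' (by
        exact Nat.pow_le_pow_right (by omega) hr)

lemma neg_one_pow_q1 : (-1 : F) ^ (q + 1) = 1 := by
  rcases Nat.even_or_odd q with he | ho
  · have hp2 : p = 2 := by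
      have : 2 ∣ p ^ r := by rw [← hq]; exact he.two_dvd
      have := (Nat.prime_two.dvd_of_dvd_pow this)
      exact ((Nat.prime_dvd_prime_iff_eq Nat.prime_two hp).mp this).symm
    haveI : CharP F 2 := by have := charF hp hr hq hF; rwa [hp2] at this
    rw [show (-1 : F) = 1 from CharTwo.neg_eq 1, one_pow]
  · exact (ho.add_one).neg_one_pow

lemma neg_pow_q1 (x : F) : (-x) ^ (q + 1) = x ^ (q + 1) := by
  rw [neg_eq_neg_one_mul, mul_pow, neg_one_pow_q1 hp hr hq hF, one_mul]

lemma Kcard :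
    (univ.filter fun x : F => x ^ (q + 1) = 1 ∧ (1 + x) ^ (q + 1) = 1).card
      = (if q % 3 = 1 then 0 else if q % 3 = 0 then 1 else 2) := by
  have hq2 : 2 ≤ q := hq2' hp hr hq hF
  -- key characterization
  have hiff : ∀ x : F, (x ^ (q + 1) = 1 ∧ (1 + x) ^ (q + 1) = 1)
      ↔ (x ^ 2 + x + 1 = 0 ∧ x ^ (q + 1) = 1) := by
    intro x
    constructor
    · rintro ⟨h1, h2⟩
      refine ⟨?_, h1⟩
      have e1 : x ^ (q + 1) = x ^ q * x := by rw [pow_succ]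
      have e2 : (1 + x) ^ (q + 1) = (1 + x ^ q) * (1 + x) := by
        rw [pow_succ, frobF hp hr hq hF]
      rw [e2] at h2
      rw [e1] at h1
      linear_combination x * h2 - (1 + x) * h1
    · rintro ⟨h1, h2⟩
      refine ⟨h2, ?_⟩
      have e : 1 + x = -(x ^ 2) := by linear_combination h1
      rw [e, neg_pow_q1 hp hr hq hF, ← pow_mul, mul_comm 2, pow_mul, h2, one_pow]
  have hset : (univ.filter fun x : F => x ^ (q + 1) = 1 ∧ (1 + x) ^ (q + 1) = 1)
      = (univ.filter fun x : F => x ^ 2 + x + 1 = 0 ∧ x ^ (q + 1) = 1) := by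
    ext x; simp only [mem_filter, mem_univ, true_and, hiff x]
  rw [hset]
  haveI hch := charF hp hr hq hF
  have hm3 : q % 3 = 0 ∨ q % 3 = 1 ∨ q % 3 = 2 := by omega
  rcases hm3 with h3 | h3 | h3
  · -- q ≡ 0 : p = 3
    have hp3 : p = 3 := by
      have : (3 : ℕ).Prime := Nat.prime_three
      have hd3 : 3 ∣ p ^ r := by rw [← hq]; omega
      exact ((Nat.prime_dvd_prime_iff_eq this hp).mp (this.dvd_of_dvd_pow hd3)).symm
    haveI : CharP F 3 := by rwa [hp3] at hch
    have h3F : (3 : F) = 0 := CharP.cast_eq_zero F 3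
    have : (univ.filter fun x : F => x ^ 2 + x + 1 = 0 ∧ x ^ (q + 1) = 1) = {1} := by
      ext x
      simp only [mem_filter, mem_univ, true_and, mem_singleton]
      constructor
      · rintro ⟨h1, -⟩
        have hsq : (x - 1) ^ 2 = 0 := by linear_combination h1 - x * h3F
        have := pow_eq_zero_iff (two_ne_zero) |>.mp hsq
        exact sub_eq_zero.mp this
      · rintro rfl
        refine ⟨by linear_combination h3F, one_pow _⟩
    rw [this, h3, if_neg (by omega), if_pos rfl, card_singleton]
  · -- q ≡ 1 : empty
    have hp3 : p ≠ 3 := by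
      rintro rfl
      have : q % 3 = 0 := Nat.eq_zero_of_dvd_of_lt (Nat.dvd_mod_iff (dvd_refl 3) |>.mpr
        (hq ▸ dvd_pow_self 3 (by omega))) (Nat.mod_lt q (by omega))
      omega
    have h3F : (3 : F) ≠ 0 := by
      intro h
      exact hp3 ((Nat.prime_dvd_prime_iff_eq hp Nat.prime_three).mp
        ((CharP.cast_eq_zero_iff F p 3).mp h))
    have : (univ.filter fun x : F => x ^ 2 + x + 1 = 0 ∧ x ^ (q + 1) = 1) = ∅ := by
      ext x
      simp only [mem_filter, mem_univ, true_and, notMem_empty, iff_false, not_and]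
      intro h1 h2
      have hx3 : x ^ 3 = 1 := by linear_combination (x - 1) * h1
      obtain ⟨k, hk⟩ : ∃ k, q + 1 = 3 * k + 2 := ⟨q / 3, by omega⟩
      have hx2 : x ^ 2 = 1 := by
        calc x ^ 2 = (x ^ 3) ^ k * x ^ 2 := by rw [hx3, one_pow, one_mul]
        _ = x ^ (q + 1) := by rw [← pow_mul, ← pow_add, ← hk]
        _ = 1 := h2
      have hx1 : x = 1 := by
        have h := hx3
        rw [pow_succ, hx2, one_mul] at h
        exact h
      rw [hx1] at h1
      apply h3F; linear_combination h1
    rw [this, h3, if_pos rfl, card_empty]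
  · -- q ≡ 2
    have hp3 : p ≠ 3 := by
      rintro rfl
      have : q % 3 = 0 := Nat.eq_zero_of_dvd_of_lt (Nat.dvd_mod_iff (dvd_refl 3) |>.mpr
        (hq ▸ dvd_pow_self 3 (by omega))) (Nat.mod_lt q (by omega))
      omega
    have h3F : (3 : F) ≠ 0 := by
      intro h
      exact hp3 ((Nat.prime_dvd_prime_iff_eq hp Nat.prime_three).mp
        ((CharP.cast_eq_zero_iff F p 3).mp h))
    obtain ⟨k, hk⟩ : ∃ k, q + 1 = 3 * k := ⟨(q + 1) / 3, by omega⟩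
    have hset2 : (univ.filter fun x : F => x ^ 2 + x + 1 = 0 ∧ x ^ (q + 1) = 1)
        = (univ.filter fun x : F => x ^ 2 + x + 1 = 0) := by
      ext x
      simp only [mem_filter, mem_univ, true_and, and_iff_left_iff_imp]
      intro h1
      have hx3 : x ^ 3 = 1 := by linear_combination (x - 1) * h1
      rw [hk, pow_mul, hx3, one_pow]
    rw [hset2]
    have hcube : (univ.filter fun x : F => x ^ 3 = 1).card = 3 := by
      apply rootcount' hq2 hF (by omega)
      obtain ⟨m, hm⟩ : ∃ m, q = 3 * m + 2 := ⟨q / 3, by omega⟩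
      refine ⟨3 * m ^ 2 + 4 * m + 1, ?_⟩
      rw [hm]
      have e1 : (3 * m + 2) ^ 2 = 9 * m ^ 2 + 12 * m + 4 := by ring
      have e2 : 3 * (3 * m ^ 2 + 4 * m + 1) = 9 * m ^ 2 + 12 * m + 3 := by ring
      omega
    have hins : (univ.filter fun x : F => x ^ 3 = 1)
        = insert 1 (univ.filter fun x : F => x ^ 2 + x + 1 = 0) := by
      ext x
      simp only [mem_filter, mem_univ, true_and, mem_insert]
      constructor
      · intro hx
        rcases mul_eq_zero.mp (show (x - 1) * (x ^ 2 + x + 1) = 0 by linear_combination hx)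
          with h | h
        · exact Or.inl (sub_eq_zero.mp h)
        · exact Or.inr h
      · rintro (rfl | h)
        · exact one_pow 3
        · linear_combination (x - 1) * h
    have hnot : (1 : F) ∉ (univ.filter fun x : F => x ^ 2 + x + 1 = 0) := by
      simp only [mem_filter, mem_univ, true_and]
      intro h; apply h3F; linear_combination h
    rw [hins, card_insert_of_notMem hnot] at hcube
    rw [h3, if_neg (by omega), if_neg (by omega)]
    omega

end
open scoped Classical in
noncomputable def eF (q : ℕ) {F : Type*} [Field F] (a : F) : ℕ :=
  (if a = 0 then 1 else 0) + (if a ^ (q + 1) = 1 then q - 1 else 0)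

section
variable {F : Type*} [Field F] [Fintype F] {q : ℕ} (hq2 : 2 ≤ q) (hF : Fintype.card F = q ^ 2)
variable [DecidableEq F]
include hq2 hF

lemma eF_zero : eF q (0 : F) = 1 := by
  unfold eF
  rw [if_pos rfl, if_neg, add_zero]
  rw [zero_pow (by omega : q + 1 ≠ 0)]
  exact zero_ne_one

lemma eF_mu {a : F} (ha : a ^ (q + 1) = 1) : eF q a = q - 1 := by
  unfold eF
  rw [if_pos ha, if_neg (mu_ne_zero hq2 hF ha), zero_add]

lemma nzero : (Finset.univ.filter fun x : F => x ^ (q - 1) = 0).card = 1 := by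
  have h : (Finset.univ.filter fun x : F => x ^ (q - 1) = 0) = {0} := by
    ext x
    simp [pow_eq_zero_iff (show q - 1 ≠ 0 by omega)]
  rw [h, Finset.card_singleton]

lemma n_eq_e (a : F) : (Finset.univ.filter fun x : F => x ^ (q - 1) = a).card = eF q a := by
  by_cases h0 : a = 0
  · subst h0; rw [nzero hq2 hF, eF_zero hq2 hF]
  by_cases hμ : a ^ (q + 1) = 1
  · rw [nmu hq2 hF hμ, eF_mu hq2 hF hμ]
  · unfold eF
    rw [if_neg h0, if_neg hμ]
    rw [Finset.card_eq_zero, Finset.filter_eq_empty_iff]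
    intro x _
    intro hx
    apply hμ
    rw [← hx]
    apply pow_q2 hq2 hF
    intro hx0
    subst hx0
    rw [zero_pow (by omega : q - 1 ≠ 0)] at hx
    exact h0 hx.symm

lemma sum_eF_mul (f : F → ℕ) :
    ∑ x : F, eF q x * f x
      = f 0 + (q - 1) * ∑ x ∈ Finset.univ.filter (fun a : F => a ^ (q + 1) = 1), f x := by
  have h1 : ∀ x : F, eF q x * f x
      = (if x = 0 then f x else 0) + (if x ^ (q + 1) = 1 then (q - 1) * f x else 0) := by
    intro x
    unfold eF
    split_ifs <;> ring
  rw [Finset.sum_congr rfl (fun x _ => h1 x), Finset.sum_add_distrib,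
    Finset.sum_ite_eq' Finset.univ (0 : F) f, if_pos (Finset.mem_univ 0),
    ← Finset.sum_filter, ← Finset.mul_sum]

end

lemma card_filter_and_prod {α β : Type*} [Fintype α] [Fintype β] (P : α → Prop) (Q : β → Prop)
    [DecidablePred P] [DecidablePred Q] [DecidablePred fun t : α × β => P t.1 ∧ Q t.2] :
    (Finset.univ.filter fun t : α × β => P t.1 ∧ Q t.2).card
      = (Finset.univ.filter P).card * (Finset.univ.filter Q).card := by
  rw [← Fintype.card_subtype, ← Fintype.card_subtype, ← Fintype.card_subtype,
    ← Fintype.card_prod]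
  exact Fintype.card_congr (Equiv.subtypeProdEquivProd)

lemma arithhelp (s K C : ℕ)
    (hfin : C + 1 = (1 + (s + 2 - 1) * ((s + 2 + 1) * (s + 2 - 1)))
      + (s + 2 - 1) * ((s + 2 + 1) * ((s + 2 - 1) + (s + 2 - 1) * (1 + (s + 2 - 1) * K)))) :
    C = ((s + 2) ^ 2 - 1) * (3 * (s + 2 - 1) + (s + 2 - 1) ^ 2 * K) := by
  have h1 : s + 2 - 1 = s + 1 := rfl
  have h2 : (s + 2) ^ 2 - 1 = (s + 1) * (s + 3) := by
    have : (s + 2) ^ 2 = s * s + 4 * s + 4 := by ring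
    have e : (s + 1) * (s + 3) = s * s + 4 * s + 3 := by ring
    omega
  rw [h1] at hfin
  rw [h1, h2]
  have key : (1 + (s + 1) * ((s + 2 + 1) * (s + 1)))
      + (s + 1) * ((s + 2 + 1) * ((s + 1) + (s + 1) * (1 + (s + 1) * K)))
      = (s + 1) * (s + 3) * (3 * (s + 1) + (s + 1) ^ 2 * K) + 1 := by ring
  omega

theorem fermat_curve_Fq2_count {p r : ℕ} (hp : p.Prime) (hr : 0 < r) {q : ℕ} (hq : q = p ^ r)
    {F : Type*} [Field F] [Fintype F] (hF : Fintype.card F = q ^ 2) :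
    Nat.card {t : F × F × F //
        t ≠ 0 ∧ t.1 ^ (q - 1) + t.2.1 ^ (q - 1) + t.2.2 ^ (q - 1) = 0} =
      (q ^ 2 - 1) *
        (if q % 3 = 1 then 3 * (q - 1)
         else if q % 3 = 0 then 3 * (q - 1) + (q - 1) ^ 2
         else 3 * (q - 1) + 2 * (q - 1) ^ 2) := by
  letI : DecidableEq F := Classical.decEq F
  have hq2 : 2 ≤ q := hq2' hp hr hq hF
  set μ : Finset F := Finset.univ.filter (fun a : F => a ^ (q + 1) = 1) with hμdef
  set K : ℕ := (Finset.univ.filter fun x : F =>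
    x ^ (q + 1) = 1 ∧ (1 + x) ^ (q + 1) = 1).card with hKdef
  set P : F × F × F → Prop :=
    fun t => t ≠ 0 ∧ t.1 ^ (q - 1) + t.2.1 ^ (q - 1) + t.2.2 ^ (q - 1) = 0 with hPdef
  set φ : F × F × F → F × F × F :=
    fun t => (t.1 ^ (q - 1), t.2.1 ^ (q - 1), t.2.2 ^ (q - 1)) with hφdef
  set E : F × F × F → ℕ := fun y => eF q y.1 * (eF q y.2.1 * eF q y.2.2) with hEdef
  have hμmem : ∀ a : F, a ∈ μ ↔ a ^ (q + 1) = 1 := by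
    intro a; rw [hμdef, Finset.mem_filter]; simp
  have hnegμ : ∀ a ∈ μ, -a ∈ μ := by
    intro a ha
    rw [hμmem] at ha ⊢
    rw [neg_pow_q1 hp hr hq hF, ha]
  have hcomp : ∀ t y : F × F × F, φ t = y →
      t.1 ^ (q - 1) = y.1 ∧ t.2.1 ^ (q - 1) = y.2.1 ∧ t.2.2 ^ (q - 1) = y.2.2 := by
    intro t y h
    rw [← h]
    exact ⟨rfl, rfl, rfl⟩
  have hzero_iff : ∀ t : F × F × F, φ t = 0 ↔ t = 0 := by
    intro t
    rw [hφdef]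
    simp only [Prod.ext_iff, Prod.fst_zero, Prod.snd_zero,
      pow_eq_zero_iff (show q - 1 ≠ 0 by omega)]
  have hcard0 : Nat.card {t : F × F × F // P t} = (Finset.univ.filter P).card := by
    rw [Nat.card_eq_fintype_card, Fintype.card_subtype]
  have hfib : (Finset.univ.filter P).card
      = ∑ y : F × F × F, ((Finset.univ.filter P).filter fun t => φ t = y).card :=
    Finset.card_eq_sum_card_fiberwise (fun x _ => Finset.mem_univ _)
  have hstep : ∀ y : F × F × F, ((Finset.univ.filter P).filter fun t => φ t = y).card
      = if (y ≠ 0 ∧ y.1 + y.2.1 + y.2.2 = 0) then E y else 0 := by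
    intro y
    have hfull : (Finset.univ.filter fun t : F × F × F => φ t = y).card = E y := by
      have hset : (Finset.univ.filter fun t : F × F × F => φ t = y)
          = (Finset.univ.filter fun t : F × F × F => t.1 ^ (q - 1) = y.1 ∧
              (t.2.1 ^ (q - 1) = y.2.1 ∧ t.2.2 ^ (q - 1) = y.2.2)) := by
        ext t
        simp only [Finset.mem_filter, Finset.mem_univ, true_and, hφdef, Prod.ext_iff]
      have h3 := card_filter_and_prod (fun x : F => x ^ (q - 1) = y.1)
        (fun z : F × F => z.1 ^ (q - 1) = y.2.1 ∧ z.2 ^ (q - 1) = y.2.2)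
      have h4 := card_filter_and_prod (fun x : F => x ^ (q - 1) = y.2.1)
        (fun x : F => x ^ (q - 1) = y.2.2)
      rw [hset, h3, h4, n_eq_e hq2 hF, n_eq_e hq2 hF, n_eq_e hq2 hF, hEdef]
    by_cases hcond : (y ≠ 0 ∧ y.1 + y.2.1 + y.2.2 = 0)
    · rw [if_pos hcond, ← hfull]
      congr 1
      ext t
      simp only [Finset.mem_filter, Finset.mem_univ, true_and]
      constructor
      · rintro ⟨-, h⟩; exact h
      · intro h
        refine ⟨⟨?_, ?_⟩, h⟩
        · intro ht
          exact hcond.1 (by rw [← h]; exact (hzero_iff t).mpr ht)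
        · obtain ⟨h1, h2, h3⟩ := hcomp t y h
          rw [h1, h2, h3]
          exact hcond.2
    · rw [if_neg hcond, Finset.card_eq_zero, Finset.filter_eq_empty_iff]
      intro t ht hty
      apply hcond
      rw [Finset.mem_filter] at ht
      obtain ⟨-, ht0, hsum⟩ := ht
      obtain ⟨h1, h2, h3⟩ := hcomp t y hty
      refine ⟨?_, by rw [← h1, ← h2, ← h3]; exact hsum⟩
      intro hy0
      exact ht0 ((hzero_iff t).mp (by rw [hty, hy0]))
  -- the unconditional sum A
  have hA1 : (∑ y : F × F × F, if y.1 + y.2.1 + y.2.2 = 0 then E y else 0)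
      = (∑ y : F × F × F, if (y ≠ 0 ∧ y.1 + y.2.1 + y.2.2 = 0) then E y else 0) + 1 := by
    rw [← Finset.sum_erase_add Finset.univ _ (Finset.mem_univ (0 : F × F × F)),
      ← Finset.sum_erase_add Finset.univ
        (fun y => if (y ≠ 0 ∧ y.1 + y.2.1 + y.2.2 = 0) then E y else 0)
        (Finset.mem_univ (0 : F × F × F))]
    have e1 : (if ((0 : F × F × F).1 + (0 : F × F × F).2.1 + (0 : F × F × F).2.2 = 0)
        then E 0 else 0) = 1 := by
      rw [if_pos (by simp)]
      rw [hEdef]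
      simp only
      rw [show (0 : F × F × F).1 = 0 from rfl, show (0 : F × F × F).2.1 = 0 from rfl,
        show (0 : F × F × F).2.2 = 0 from rfl, eF_zero hq2 hF]
    have e2 : (if ((0 : F × F × F) ≠ 0 ∧
        (0 : F × F × F).1 + (0 : F × F × F).2.1 + (0 : F × F × F).2.2 = 0)
        then E (0 : F × F × F) else 0) = 0 := by
      rw [if_neg (by simp)]
    rw [e1, e2, add_zero]
    congr 1
    apply Finset.sum_congr rfl
    intro y hy
    have hy0 : y ≠ 0 := (Finset.mem_erase.mp hy).1
    by_cases hc : y.1 + y.2.1 + y.2.2 = 0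
    · rw [if_pos hc, if_pos ⟨hy0, hc⟩]
    · rw [if_neg hc, if_neg (fun h => hc h.2)]
  -- evaluate A
  have hKa : ∀ a ∈ μ, (μ.filter fun b => (a + b) ^ (q + 1) = 1).card = K := by
    intro a ha
    rw [hμmem] at ha
    have ha0 : a ≠ 0 := mu_ne_zero hq2 hF ha
    rw [hKdef]
    apply Finset.card_bij' (fun b _ => a⁻¹ * b) (fun x _ => a * x)
    · intro b hb
      rw [Finset.mem_filter] at hb ⊢
      obtain ⟨hbμ, hab⟩ := hb
      rw [hμmem] at hbμ
      refine ⟨Finset.mem_univ _, ?_, ?_⟩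
      · rw [mul_pow, inv_pow, ha, inv_one, one_mul, hbμ]
      · have : (1 : F) + a⁻¹ * b = a⁻¹ * (a + b) := by field_simp
        rw [this, mul_pow, inv_pow, ha, inv_one, one_mul, hab]
    · intro x hx
      rw [Finset.mem_filter] at hx ⊢
      obtain ⟨-, hxμ, h1x⟩ := hx
      constructor
      · rw [hμmem, mul_pow, ha, one_mul, hxμ]
      · have : a + a * x = a * (1 + x) := by ring
        rw [this, mul_pow, ha, one_mul, h1x]
    · intro b _; field_simp
    · intro x _; field_simp
  have hrow : ∀ a ∈ μ, (∑ b ∈ μ, eF q (-(a + b))) = 1 + (q - 1) * K := by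
    intro a ha
    have hpt : ∀ b : F, eF q (-(a + b))
        = (if a + b = 0 then 1 else 0) + (if (a + b) ^ (q + 1) = 1 then q - 1 else 0) := by
      intro b
      unfold eF
      simp only [neg_eq_zero, neg_pow_q1 hp hr hq hF]
    rw [Finset.sum_congr rfl (fun b _ => hpt b), Finset.sum_add_distrib]
    congr 1
    · have hcnd : ∀ b : F, (a + b = 0) ↔ (b = -a) := by
        intro b; constructor
        · intro h; linear_combination h
        · intro h; rw [h]; ring
      rw [Finset.sum_congr rfl (fun b _ => if_congr (hcnd b) rfl rfl),
        Finset.sum_ite_eq' μ (-a) (fun _ => 1), if_pos (hnegμ a ha)]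
    · rw [← Finset.sum_filter, Finset.sum_const, smul_eq_mul, hKa a ha, mul_comm]
  have hf0 : (∑ b : F, eF q b * eF q (-(0 + b))) = 1 + (q - 1) * ((q + 1) * (q - 1)) := by
    rw [sum_eF_mul hq2 hF (fun b => eF q (-(0 + b)))]
    congr 1
    · rw [add_zero, neg_zero, eF_zero hq2 hF]
    · congr 1
      rw [show (Finset.univ.filter (fun a : F => a ^ (q + 1) = 1)) = μ from rfl]
      have : ∀ b ∈ μ, eF q (-(0 + b)) = q - 1 := by
        intro b hb
        apply eF_mu hq2 hF
        rw [neg_pow_q1 hp hr hq hF, zero_add, (hμmem b).mp hb]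
      rw [Finset.sum_congr rfl this, Finset.sum_const, smul_eq_mul,
        show μ.card = q + 1 from mucard hq2 hF]
  have hfa : ∀ a ∈ μ, (∑ b : F, eF q b * eF q (-(a + b)))
      = (q - 1) + (q - 1) * (1 + (q - 1) * K) := by
    intro a ha
    rw [sum_eF_mul hq2 hF (fun b => eF q (-(a + b)))]
    congr 1
    · rw [add_zero]
      apply eF_mu hq2 hF
      rw [neg_pow_q1 hp hr hq hF, (hμmem a).mp ha]
    · rw [show (Finset.univ.filter (fun a : F => a ^ (q + 1) = 1)) = μ from rfl,
        hrow a ha]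
  have hAval : (∑ y : F × F × F, if y.1 + y.2.1 + y.2.2 = 0 then E y else 0)
      = (1 + (q - 1) * ((q + 1) * (q - 1)))
        + (q - 1) * ((q + 1) * ((q - 1) + (q - 1) * (1 + (q - 1) * K))) := by
    rw [Fintype.sum_prod_type]
    have hinner : ∀ a : F, (∑ z : F × F, if a + z.1 + z.2 = 0 then E (a, z) else 0)
        = eF q a * (∑ b : F, eF q b * eF q (-(a + b))) := by
      intro a
      rw [Fintype.sum_prod_type, Finset.mul_sum]
      apply Finset.sum_congr rfl
      intro b _
      have hcnd : ∀ c : F, (a + b + c = 0) ↔ (c = -(a + b)) := by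
        intro c; constructor
        · intro h; linear_combination h
        · intro h; rw [h]; ring
      rw [Finset.sum_congr rfl (fun c _ => if_congr (hcnd c) rfl rfl),
        Finset.sum_ite_eq' Finset.univ (-(a + b)) (fun c => E (a, b, c)),
        if_pos (Finset.mem_univ _), hEdef]
    rw [Finset.sum_congr rfl (fun a _ => hinner a),
      sum_eF_mul hq2 hF (fun a => ∑ b : F, eF q b * eF q (-(a + b))), hf0]
    congr 1
    congr 1
    rw [show (Finset.univ.filter (fun a : F => a ^ (q + 1) = 1)) = μ from rfl,
      Finset.sum_congr rfl hfa, Finset.sum_const, smul_eq_mul,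
      show μ.card = q + 1 from mucard hq2 hF]
  -- put it together
  have hCsum : (Finset.univ.filter P).card
      = ∑ y : F × F × F, if (y ≠ 0 ∧ y.1 + y.2.1 + y.2.2 = 0) then E y else 0 := by
    rw [hfib]
    exact Finset.sum_congr rfl (fun y _ => hstep y)
  have hfinal : (Finset.univ.filter P).card + 1
      = (1 + (q - 1) * ((q + 1) * (q - 1)))
        + (q - 1) * ((q + 1) * ((q - 1) + (q - 1) * (1 + (q - 1) * K))) := by
    rw [hCsum, ← hA1, hAval]
  rw [hcard0]
  have hKval : K = (if q % 3 = 1 then 0 else if q % 3 = 0 then 1 else 2) :=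
    Kcard hp hr hq hF
  obtain ⟨s, rfl⟩ : ∃ s, q = s + 2 := ⟨q - 2, by omega⟩
  have hC := arithhelp s K _ hfinal
  rw [hC, hKval]
  split_ifs <;> ring
end

section
/- Let q = p^r be a power of a prime p and let F_{q^2} denote the finite field with q^2 elements. If u, v, w, x ∈ F_{q^2} are all nonzero and satisfy u^{q-1} + v^{q-1} + w^{q-1} + x^{q-1} = 0, then (u^{q-1} + v^{q-1}) · (u^{q-1} + w^{q-1}) · (v^{q-1} + w^{q-1}) = 0; that is, two of u^{q-1}, v^{q-1}, w^{q-1} are negatives of one another. -/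
theorem fermat_surface_necessary {p r : ℕ} (hp : p.Prime) (hr : 0 < r) {q : ℕ} (hq : q = p ^ r)
    {F : Type*} [Field F] [Fintype F] (hF : Fintype.card F = q ^ 2)
    (u v w x : F) (hu : u ≠ 0) (hv : v ≠ 0) (hw : w ≠ 0) (hx : x ≠ 0)
    (h : u ^ (q - 1) + v ^ (q - 1) + w ^ (q - 1) + x ^ (q - 1) = 0) :
    (u ^ (q - 1) + v ^ (q - 1)) * (u ^ (q - 1) + w ^ (q - 1)) *
      (v ^ (q - 1) + w ^ (q - 1)) = 0 := by
  haveI := Fact.mk hp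
  have hq1 : 1 ≤ q := hq ▸ Nat.one_le_pow _ _ hp.pos
  have hq0 : q ≠ 0 := by omega
  -- characteristic
  have hpF : (p : F) = 0 := by
    have h0 : ((Fintype.card F : ℕ) : F) = 0 := FiniteField.cast_card_eq_zero F
    rw [hF, hq] at h0
    push_cast at h0
    have h0' : ((p : F)) ^ (r * 2) = 0 := by rw [pow_mul]; exact_mod_cast h0
    exact pow_eq_zero_iff (by omega) |>.mp h0'
  haveI : CharP F p := by
    have hdvd : ringChar F ∣ p := ringChar.dvd hpF
    have hprime : (ringChar F).Prime := CharP.char_is_prime F (ringChar F)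
    have : ringChar F = p := ((Nat.prime_dvd_prime_iff_eq hprime hp).mp hdvd)
    exact this ▸ ringChar.charP F
  have frob : ∀ y z : F, (y + z) ^ q = y ^ q + z ^ q := by
    intro y z; rw [hq]; exact add_pow_char_pow y z p r
  set a := u ^ (q - 1) with ha
  set b := v ^ (q - 1) with hb
  set c := w ^ (q - 1) with hc
  set d := x ^ (q - 1) with hd
  have key : ∀ z : F, z ≠ 0 → (z ^ (q - 1)) ^ q = (z ^ (q - 1))⁻¹ := by
    intro z hz
    have h1 : (z ^ (q - 1)) ^ (q + 1) = 1 := by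
      rw [← pow_mul]
      have hm : (q - 1) * (q + 1) = q ^ 2 - 1 := by
        obtain ⟨m, rfl⟩ := Nat.exists_eq_add_of_le hq1
        have : (1 + m) ^ 2 = m * (m + 2) + 1 := by ring
        simp [this]
        omega
      rw [hm, ← hF]
      exact FiniteField.pow_card_sub_one_eq_one z (hz)
    have hz' : z ^ (q - 1) ≠ 0 := pow_ne_zero _ hz
    field_simp
    calc z ^ (q-1) * (z ^ (q-1)) ^ q = (z ^ (q-1)) ^ (q+1) := by ring
      _ = 1 := h1
  have hsum : a⁻¹ + b⁻¹ + c⁻¹ + d⁻¹ = 0 := by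
    rw [← key u hu, ← key v hv, ← key w hw, ← key x hx,
      ← frob, ← frob, ← frob, h, zero_pow hq0]
  have ha0 : a ≠ 0 := pow_ne_zero _ hu
  have hb0 : b ≠ 0 := pow_ne_zero _ hv
  have hc0 : c ≠ 0 := pow_ne_zero _ hw
  have hd0 : d ≠ 0 := pow_ne_zero _ hx
  have hpoly : b * c * d + a * c * d + a * b * d + a * b * c = 0 := by
    have h2 := hsum
    field_simp at h2
    linear_combination h2
  linear_combination (-1 : F) * hpoly + (a * b + a * c + b * c) * h
end

section
/- Let q = p^r be a power of a prime p and let F_{q^2} denote the finite field with q^2 elements. If u_1, u_2, u_3, u_4 ∈ F_{q^2} are all nonzero and satisfy u_1^{q-1} + u_2^{q-1} + u_3^{q-1} + u_4^{q-1} = 0, then there is a permutation σ of {1, 2, 3, 4} such that u_{σ(1)}^{q-1} = -u_{σ(2)}^{q-1} and u_{σ(3)}^{q-1} = -u_{σ(4)}^{q-1}. -/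
lemma key_pairing {F : Type*} [Field F] {a b c d : F} (ha : a ≠ 0) (hb : b ≠ 0)
    (hc : c ≠ 0) (hd : d ≠ 0) (h1 : a + b + c + d = 0)
    (h2 : b*c*d + a*c*d + a*b*d + a*b*c = 0) :
    a = -b ∨ a = -c ∨ a = -d := by
  by_contra hcon
  push_neg at hcon
  obtain ⟨nab, nac, nad⟩ := hcon
  have hab : a + b ≠ 0 := fun h => nab (eq_neg_of_add_eq_zero_left h)
  have hac : a + c ≠ 0 := fun h => nac (eq_neg_of_add_eq_zero_left h)
  have had : a + d ≠ 0 := fun h => nad (eq_neg_of_add_eq_zero_left h)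
  have e1 : a*b = c*d := by
    have : (a+b)*(c*d - a*b) = 0 := by linear_combination h2 - a*b*h1
    rcases mul_eq_zero.mp this with h | h
    · exact absurd h hab
    · linear_combination -h
  have e2 : a*c = b*d := by
    have : (a+c)*(b*d - a*c) = 0 := by linear_combination h2 - a*c*h1
    rcases mul_eq_zero.mp this with h | h
    · exact absurd h hac
    · linear_combination -h
  have e3 : a*d = b*c := by
    have : (a+d)*(b*c - a*d) = 0 := by linear_combination h2 - a*d*h1
    rcases mul_eq_zero.mp this with h | h
    · exact absurd h had
    · linear_combination -h
  have had' : a = d := by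
    have : (a^2 - d^2) * (b*c) = 0 := by linear_combination a*c*e1 + c*d*e2
    have h' : (a - d) * (a + d) = 0 := by
      rcases mul_eq_zero.mp this with h | h
      · linear_combination h
      · exact absurd h (mul_ne_zero hb hc)
    rcases mul_eq_zero.mp h' with h | h
    · exact sub_eq_zero.mp h
    · exact absurd (eq_neg_of_add_eq_zero_left h) nad
  have hacc : a = c := by
    have : (a^2 - c^2) * (b*d) = 0 := by linear_combination a*d*e1 + c*d*e3
    have h' : (a - c) * (a + c) = 0 := by
      rcases mul_eq_zero.mp this with h | h
      · linear_combination h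
      · exact absurd h (mul_ne_zero hb hd)
    rcases mul_eq_zero.mp h' with h | h
    · exact sub_eq_zero.mp h
    · exact absurd h hac
  have habb : a = b := by
    have : (a^2 - b^2) * (c*d) = 0 := by linear_combination a*d*e2 + b*d*e3
    have h' : (a - b) * (a + b) = 0 := by
      rcases mul_eq_zero.mp this with h | h
      · linear_combination h
      · exact absurd h (mul_ne_zero hc hd)
    rcases mul_eq_zero.mp h' with h | h
    · exact sub_eq_zero.mp h
    · exact absurd h hab
  have h4 : (2 : F) * (2 * a) = 0 := by linear_combination h1 + habb + hacc + had'
  rcases mul_eq_zero.mp h4 with h | h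
  · exact nab (by linear_combination habb + b*h)
  · rcases mul_eq_zero.mp h with h | h
    · exact nab (by linear_combination habb + b*h)
    · exact ha h

theorem fermat_surface_pairing {p r : ℕ} (hp : p.Prime) (hr : 0 < r) {q : ℕ} (hq : q = p ^ r)
    {F : Type*} [Field F] [Fintype F] (hF : Fintype.card F = q ^ 2)
    (u : Fin 4 → F) (hu : ∀ i, u i ≠ 0)
    (h : u 0 ^ (q - 1) + u 1 ^ (q - 1) + u 2 ^ (q - 1) + u 3 ^ (q - 1) = 0) :
    ∃ σ : Equiv.Perm (Fin 4),
      u (σ 0) ^ (q - 1) = -u (σ 1) ^ (q - 1) ∧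
      u (σ 2) ^ (q - 1) = -u (σ 3) ^ (q - 1) := by
  have hq2 : 2 ≤ q := by
    subst hq
    calc 2 ≤ p := hp.two_le
    _ = p ^ 1 := (pow_one p).symm
    _ ≤ p ^ r := Nat.pow_le_pow_right hp.pos hr
  haveI : Fact p.Prime := ⟨hp⟩
  obtain ⟨n, hcprime, hcard⟩ := FiniteField.card F (ringChar F)
  have hpc : p = ringChar F := by
    have hdvd : p ∣ ringChar F ^ (n : ℕ) := by
      rw [← hcard, hF, hq]
      exact dvd_pow (dvd_pow_self p hr.ne') (by positivity)
    exact (Nat.prime_dvd_prime_iff_eq hp hcprime).mp (hp.dvd_of_dvd_pow hdvd)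
  haveI : CharP F p := ringChar.of_eq hpc.symm
  set a : Fin 4 → F := fun i => u i ^ (q - 1) with ha_def
  have ha : ∀ i, a i ≠ 0 := fun i => pow_ne_zero _ (hu i)
  have hroot : ∀ i, a i ^ (q + 1) = 1 := by
    intro i
    have hmul : (q - 1) * (q + 1) = q ^ 2 - 1 := by
      rw [Nat.sq_sub_sq q 1]
      exact mul_comm _ _
    rw [ha_def]
    simp only
    rw [← pow_mul, hmul, ← hF]
    exact FiniteField.pow_card_sub_one_eq_one (u i) (hu i)
  have hinv : ∀ i, a i ^ q = (a i)⁻¹ := by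
    intro i
    refine eq_inv_of_mul_eq_one_left ?_
    rw [← pow_succ]
    exact hroot i
  have hfrob : ∀ x y : F, (x + y) ^ q = x ^ q + y ^ q := by
    intro x y
    rw [hq]
    exact add_pow_char_pow x y p r
  have h' : (a 0)⁻¹ + (a 1)⁻¹ + (a 2)⁻¹ + (a 3)⁻¹ = 0 := by
    have h0 := congrArg (· ^ q) h
    simp only [hfrob, hinv, zero_pow (by omega : q ≠ 0)] at h0
    change a 0 ^ q + a 1 ^ q + a 2 ^ q + a 3 ^ q = 0 at h0
    rw [hinv, hinv, hinv, hinv] at h0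
    exact h0
  have hsum : a 0 + a 1 + a 2 + a 3 = 0 := h
  have hrw : ∀ i, u i ^ (q - 1) = a i := fun i => rfl
  clear_value a
  clear h ha_def
  have h2 : a 1 * a 2 * a 3 + a 0 * a 2 * a 3 + a 0 * a 1 * a 3 + a 0 * a 1 * a 2 = 0 := by
    have h0 := ha 0; have h1 := ha 1; have h2 := ha 2; have h3 := ha 3
    field_simp at h'
    linear_combination h'
  rcases key_pairing (ha 0) (ha 1) (ha 2) (ha 3) hsum h2 with hc | hc | hc
  · refine ⟨Equiv.refl _, ?_, ?_⟩
    · simp only [Equiv.refl_apply, hrw]; exact hc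
    · simp only [Equiv.refl_apply, hrw]; linear_combination hsum - hc
  · have s0 : (Equiv.swap (1 : Fin 4) 2) 0 = 0 :=
      Equiv.swap_apply_of_ne_of_ne (by decide) (by decide)
    have s1 : (Equiv.swap (1 : Fin 4) 2) 1 = 2 := Equiv.swap_apply_left 1 2
    have s2 : (Equiv.swap (1 : Fin 4) 2) 2 = 1 := Equiv.swap_apply_right 1 2
    have s3 : (Equiv.swap (1 : Fin 4) 2) 3 = 3 :=
      Equiv.swap_apply_of_ne_of_ne (by decide) (by decide)
    refine ⟨Equiv.swap 1 2, ?_, ?_⟩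
    · rw [s0, s1, hrw, hrw]; exact hc
    · rw [s2, s3, hrw, hrw]; linear_combination hsum - hc
  · have s0 : (Equiv.swap (1 : Fin 4) 3) 0 = 0 :=
      Equiv.swap_apply_of_ne_of_ne (by decide) (by decide)
    have s1 : (Equiv.swap (1 : Fin 4) 3) 1 = 3 := Equiv.swap_apply_left 1 3
    have s2 : (Equiv.swap (1 : Fin 4) 3) 2 = 2 :=
      Equiv.swap_apply_of_ne_of_ne (by decide) (by decide)
    have s3 : (Equiv.swap (1 : Fin 4) 3) 3 = 1 := Equiv.swap_apply_right 1 3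
    refine ⟨Equiv.swap 1 3, ?_, ?_⟩
    · rw [s0, s1, hrw, hrw]; exact hc
    · rw [s2, s3, hrw, hrw]; linear_combination hsum - hc
end

section
/- Let q = p^r be a power of a prime p and let F_{q^2} denote the finite field with q^2 elements. If u, v, w, x ∈ F_{q^2} satisfy u^{q-1} + v^{q-1} + w^{q-1} + x^{q-1} = 0, then there exists s ∈ F_{q^2} with u·v·w·x = s^2 (i.e., uvwx is a square in F_{q^2}). -/
theorem fermat_surface_square {p r : ℕ} (hp : p.Prime) (hr : 0 < r) {q : ℕ} (hq : q = p ^ r)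
    {F : Type*} [Field F] [Fintype F] (hF : Fintype.card F = q ^ 2)
    (u v w x : F) (h : u ^ (q - 1) + v ^ (q - 1) + w ^ (q - 1) + x ^ (q - 1) = 0) :
    ∃ s : F, u * v * w * x = s ^ 2 := by
  -- first, the characteristic of F is p
  have hc : ringChar F = p := by
    obtain ⟨n, hcp, hcard⟩ := FiniteField.card F (ringChar F)
    rw [hF, hq, ← pow_mul] at hcard
    have hdvd : ringChar F ∣ p ^ (r * 2) := hcard ▸ dvd_pow_self _ (by positivity)
    have := (Nat.Prime.dvd_of_dvd_pow hcp hdvd)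
    exact ((Nat.prime_dvd_prime_iff_eq hcp hp).mp this)
  have hq2 : 2 ≤ q := hq ▸ le_trans hp.two_le (Nat.le_self_pow hr.ne' p)
  -- characteristic 2 case: everything is a square
  by_cases hp2 : p = 2
  · obtain ⟨s, hs⟩ := FiniteField.isSquare_of_char_two (by rw [hc, hp2]) (u * v * w * x)
    exact ⟨s, by rw [hs, sq]⟩
  -- now p is odd, so q is odd
  have hqodd : Odd q := by
    rw [hq]
    exact (hp.odd_of_ne_two hp2).pow
  have hchar2 : ringChar F ≠ 2 := by rw [hc]; exact hp2
  -- dispose of the case where some variable is zero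
  by_cases hu : u = 0
  · exact ⟨0, by rw [hu]; ring⟩
  by_cases hv : v = 0
  · exact ⟨0, by rw [hv]; ring⟩
  by_cases hw : w = 0
  · exact ⟨0, by rw [hw]; ring⟩
  by_cases hx : x = 0
  · exact ⟨0, by rw [hx]; ring⟩
  -- arithmetic facts about exponents
  have e1 : (q - 1) * (q + 1) = q ^ 2 - 1 := by
    have e : q ^ 2 = (q - 1) * (q + 1) + 1 := by
      obtain ⟨m, rfl⟩ : ∃ m, q = m + 1 := ⟨q - 1, by omega⟩
      simp only [Nat.add_sub_cancel]
      ring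
    omega
  have e2 : 2 * ((q + 1) / 2) = q + 1 := by
    obtain ⟨m, hm⟩ := hqodd
    omega
  have e3 : 2 * ((q - 1) * ((q + 1) / 2)) = q ^ 2 - 1 := by
    calc 2 * ((q - 1) * ((q + 1) / 2)) = (q - 1) * (2 * ((q + 1) / 2)) := by ring
    _ = (q - 1) * (q + 1) := by rw [e2]
    _ = q ^ 2 - 1 := e1
  have hkey : (q - 1) * ((q + 1) / 2) = Fintype.card F / 2 := by
    rw [hF]; omega
  -- abbreviations
  set a := u ^ (q - 1) with ha
  set b := v ^ (q - 1) with hb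
  set c := w ^ (q - 1) with hcdef
  set d := x ^ (q - 1) with hd
  have key : ∀ t : F, t ≠ 0 → (t ^ (q - 1)) ^ (q + 1) = 1 := by
    intro t ht
    rw [← pow_mul, e1, ← hF]
    exact FiniteField.pow_card_sub_one_eq_one t ht
  have ha1 : a ^ (q + 1) = 1 := key u hu
  have hb1 : b ^ (q + 1) = 1 := key v hv
  have hc1 : c ^ (q + 1) = 1 := key w hw
  have hd1 : d ^ (q + 1) = 1 := key x hx
  have ha0 : a ≠ 0 := fun h0 => by simp [h0] at ha1
  have hb0 : b ≠ 0 := fun h0 => by simp [h0] at hb1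
  have hc0 : c ≠ 0 := fun h0 => by simp [h0] at hc1
  have hd0 : d ≠ 0 := fun h0 => by simp [h0] at hd1
  -- inversion: a ^ q = a⁻¹ etc.
  have inv_of : ∀ t : F, t ≠ 0 → t ^ (q + 1) = 1 → t ^ q = t⁻¹ := by
    intro t ht h1
    field_simp
    rw [← pow_succ]
    exact h1
  have haq : a ^ q = a⁻¹ := inv_of a ha0 ha1
  have hbq : b ^ q = b⁻¹ := inv_of b hb0 hb1
  have hcq : c ^ q = c⁻¹ := inv_of c hc0 hc1
  have hdq : d ^ q = d⁻¹ := inv_of d hd0 hd1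
  -- Frobenius
  haveI : CharP F p := hc ▸ ringChar.charP F
  haveI : Fact p.Prime := ⟨hp⟩
  have frob : ∀ s t : F, (s + t) ^ q = s ^ q + t ^ q := by
    intro s t
    rw [hq]
    exact add_pow_char_pow s t p r
  have hpowsplit : ∀ t : F, t ^ q = t ^ (q - 1) * t := by
    intro t
    rw [← pow_succ]
    congr 1
    omega
  -- main goal: (uvwx) ^ (card/2) = 1
  have main : (u * v * w * x) ^ (Fintype.card F / 2) = 1 := by
    rw [← hkey]
    have habcd : (u * v * w * x) ^ (q - 1) = a * b * c * d := by
      rw [mul_pow, mul_pow, mul_pow]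
    by_cases hz : a + b = 0
    · -- paired cancellation: b = -a, d = -c
      have hb' : b = -a := by linear_combination hz
      have hd' : d = -c := by linear_combination h - hz
      have sq_form : (u * v * w * x) ^ (q - 1) = (a * c) ^ 2 := by
        rw [habcd, hb', hd']; ring
      rw [pow_mul, sq_form, ← pow_mul, e2, mul_pow, ha1, hc1, one_mul]
    · -- both pair-sums are nonzero
      have hz' : c + d = -(a + b) := by linear_combination h
      have hzq : (a + b) ^ q = (a + b) ^ (q - 1) * (a + b) := hpowsplit (a + b)
      have hab : a * b * (a + b) ^ (q - 1) = 1 := by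
        have hf : (a + b) ^ (q - 1) * (a + b) = a⁻¹ + b⁻¹ := by
          rw [← hzq, frob, haq, hbq]
        have step : (a * b * (a + b) ^ (q - 1) - 1) * (a + b) = 0 := by
          linear_combination (a * b) * hf + b * (mul_inv_cancel₀ ha0) +
            a * (mul_inv_cancel₀ hb0)
        rcases mul_eq_zero.mp step with h1 | h1
        · linear_combination h1
        · exact absurd h1 hz
      have hcd : c * d * (a + b) ^ (q - 1) = 1 := by
        have hf : -((a + b) ^ (q - 1) * (a + b)) = c⁻¹ + d⁻¹ := by
          rw [← hzq, ← Odd.neg_pow hqodd, ← hz', frob, hcq, hdq]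
        have step : (c * d * (a + b) ^ (q - 1) - 1) * (a + b) = 0 := by
          linear_combination (-(c * d)) * hf - d * (mul_inv_cancel₀ hc0) -
            c * (mul_inv_cancel₀ hd0) - hz'
        rcases mul_eq_zero.mp step with h1 | h1
        · linear_combination h1
        · exact absurd h1 hz
      have hm : (u * v * w * x * (a + b) ^ 2) ^ (q - 1) = 1 := by
        rw [mul_pow, habcd, ← pow_mul, mul_comm 2 (q - 1), pow_mul]
        calc a * b * c * d * (((a + b) ^ (q - 1)) ^ 2)
            = (a * b * (a + b) ^ (q - 1)) * (c * d * (a + b) ^ (q - 1)) := by ring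
          _ = 1 := by rw [hab, hcd, one_mul]
      have h1 : (u * v * w * x) ^ ((q - 1) * ((q + 1) / 2)) *
          ((a + b) ^ 2) ^ ((q - 1) * ((q + 1) / 2)) = 1 := by
        rw [pow_mul, pow_mul, ← mul_pow, ← mul_pow, hm, one_pow]
      have h2 : ((a + b) ^ 2) ^ ((q - 1) * ((q + 1) / 2)) = 1 := by
        rw [← pow_mul, e3, ← hF]
        exact FiniteField.pow_card_sub_one_eq_one _ hz
      rw [h2, mul_one] at h1
      exact h1
  rw [← FiniteField.isSquare_iff hchar2 (by simp [hu, hv, hw, hx])] at main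
  obtain ⟨s, hs⟩ := main
  exact ⟨s, by rw [hs, sq]⟩
end

section
/- Let q = p^r be a power of a prime p and let F_{q^2} denote the finite field with q^2 elements. The number of quadruples (u, v, w, x) ∈ F_{q^2}^4 with (u, v, w, x) ≠ (0, 0, 0, 0) and u^{q-1} + v^{q-1} + w^{q-1} + x^{q-1} = 0 equals (q^2 - 1)·N, where N = 3(q-1)^4 + 3(q-1)^3 + 6(q-1) if q ≡ 1 (mod 6); N = 3(q-1)^4 + 3(q-1)^3 + 8(q-1)^2 + 6(q-1) if q ≡ 5 (mod 6); N = 3(q-1)^4 + 3(q-1)^3 + 4(q-1)^2 + 6(q-1) if q ≡ 0 (mod 3); N = (3q+1)(q-1)^3 + 6(q-1) if q ≡ 4 (mod 6); and N = (3q+1)(q-1)^3 + 8(q-1)^2 + 6(q-1) if q ≡ 2 (mod 6). -/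
open Finset

namespace FermatSurfaceAux

set_option linter.unusedSectionVars false
set_option maxHeartbeats 1000000

variable {F : Type*} [Field F] [Fintype F] [DecidableEq F] {q : ℕ}

def mU (q : ℕ) (F : Type*) [Field F] [Fintype F] [DecidableEq F] : Finset F :=
  univ.filter (fun a => a ^ (q + 1) = 1)

def chi (q : ℕ) (F : Type*) [Field F] [Fintype F] [DecidableEq F] : F → ℕ :=
  fun t => if t ^ (q + 1) = 1 then 1 else 0

def nb (q : ℕ) (F : Type*) [Field F] [Fintype F] [DecidableEq F] : F → ℕ :=
  fun s => ∑ a ∈ mU q F, chi q F (s - a)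

def n3 (q : ℕ) (F : Type*) [Field F] [Fintype F] [DecidableEq F] : F → ℕ :=
  fun s => ∑ a ∈ mU q F, nb q F (s - a)

def S3 (q : ℕ) (F : Type*) [Field F] [Fintype F] [DecidableEq F] : ℕ :=
  ∑ a ∈ mU q F, nb q F (-a)

def S4 (q : ℕ) (F : Type*) [Field F] [Fintype F] [DecidableEq F] : ℕ :=
  ∑ a ∈ mU q F, ∑ b ∈ mU q F, nb q F (-(a + b))

def mR (q : ℕ) (F : Type*) [Field F] [Fintype F] [DecidableEq F] : Finset F :=
  (mU q F).filter (fun t => t * t + t + 1 = 0)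

def c1 (q : ℕ) (F : Type*) [Field F] [Fintype F] [DecidableEq F] : F → ℕ :=
  fun s => ∑ u : F, if s - u ^ (q - 1) = 0 then 1 else 0

def c2 (q : ℕ) (F : Type*) [Field F] [Fintype F] [DecidableEq F] : F → ℕ :=
  fun s => ∑ u : F, c1 q F (s - u ^ (q - 1))

def c3 (q : ℕ) (F : Type*) [Field F] [Fintype F] [DecidableEq F] : F → ℕ :=
  fun s => ∑ u : F, c2 q F (s - u ^ (q - 1))

def c4 (q : ℕ) (F : Type*) [Field F] [Fintype F] [DecidableEq F] : F → ℕ :=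
  fun s => ∑ u : F, c3 q F (s - u ^ (q - 1))

lemma mem_mU {a : F} : a ∈ mU q F ↔ a ^ (q + 1) = 1 := by simp [mU]

lemma ne_zero_of_mem_mU {a : F} (h : a ∈ mU q F) : a ≠ 0 := by
  rintro rfl
  rw [mem_mU, zero_pow (Nat.succ_ne_zero q)] at h
  exact zero_ne_one h

lemma ne_zero_of_pow {a : F} (h : a ^ (q + 1) = 1) : a ≠ 0 :=
  ne_zero_of_mem_mU (mem_mU.mpr h)

lemma card_pow_eq_le {n : ℕ} (hn : 0 < n) (c : F) :
    (univ.filter fun u : F => u ^ n = c).card ≤ n := by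
  have hsub : (univ.filter fun u : F => u ^ n = c) ⊆ (Polynomial.nthRoots n c).toFinset := by
    intro x hx
    simp only [mem_filter, mem_univ, true_and] at hx
    simpa [Multiset.mem_toFinset, Polynomial.mem_nthRoots hn] using hx
  calc (univ.filter fun u : F => u ^ n = c).card
      ≤ (Polynomial.nthRoots n c).toFinset.card := Finset.card_le_card hsub
    _ ≤ Multiset.card (Polynomial.nthRoots n c) := Multiset.toFinset_card_le _
    _ ≤ n := Polynomial.card_nthRoots n c

lemma qarith (hq : 2 ≤ q) : (q - 1) * (q + 1) = q ^ 2 - 1 := by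
  obtain ⟨k, rfl⟩ : ∃ k, q = k + 1 := ⟨q - 1, by omega⟩
  have h1 : (k + 1) ^ 2 = (k * k + 2 * k) + 1 := by ring
  have h2 : k + 1 - 1 = k := by omega
  rw [h1, h2, Nat.add_sub_cancel]
  ring

lemma pow_q2 (hcard : Fintype.card F = q ^ 2) {x : F} (hx : x ≠ 0) : x ^ (q ^ 2 - 1) = 1 := by
  rw [← hcard]; exact FiniteField.pow_card_sub_one_eq_one x hx

lemma pow_mem_mU (hq : 2 ≤ q) (hcard : Fintype.card F = q ^ 2) {u : F} (hu : u ≠ 0) :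
    u ^ (q - 1) ∈ mU q F := by
  rw [mem_mU, ← pow_mul, qarith hq]
  exact pow_q2 hcard hu

section Forcing

variable (hq : 2 ≤ q) (hcard : Fintype.card F = q ^ 2)
include hq hcard

lemma card_nonzero : (univ.erase (0 : F)).card = q ^ 2 - 1 := by
  rw [Finset.card_erase_of_mem (mem_univ _), Finset.card_univ, hcard]

lemma sum_fib : ∑ s ∈ mU q F, ((univ.erase (0:F)).filter fun u => u ^ (q - 1) = s).card
    = q ^ 2 - 1 := by
  rw [← card_nonzero hq hcard]
  exact (Finset.card_eq_sum_card_fiberwise (fun u hu =>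
    pow_mem_mU hq hcard (Finset.ne_of_mem_erase hu))).symm

lemma fib_le (s : F) :
    ((univ.erase (0:F)).filter fun u => u ^ (q - 1) = s).card ≤ q - 1 := by
  refine le_trans (Finset.card_le_card ?_) (card_pow_eq_le (by omega) s)
  intro x hx
  simp only [mem_filter, mem_erase, mem_univ, true_and] at hx ⊢
  exact hx.2

lemma card_mU : (mU q F).card = q + 1 := by
  have h1 : q ^ 2 - 1 ≤ (mU q F).card * (q - 1) := by
    rw [← sum_fib hq hcard]
    calc ∑ s ∈ mU q F, ((univ.erase (0:F)).filter fun u => u ^ (q - 1) = s).card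
        ≤ ∑ _s ∈ mU q F, (q - 1) := Finset.sum_le_sum fun s _ => fib_le hq hcard s
      _ = (mU q F).card * (q - 1) := by rw [Finset.sum_const, smul_eq_mul]
  have h2 : (mU q F).card ≤ q + 1 := card_pow_eq_le (by omega) 1
  have h3 : (mU q F).card * (q - 1) ≤ (q + 1) * (q - 1) :=
    Nat.mul_le_mul_right _ h2
  have h4 : (q + 1) * (q - 1) = q ^ 2 - 1 := by rw [Nat.mul_comm]; exact qarith hq
  have h5 : (mU q F).card * (q - 1) = (q + 1) * (q - 1) := by omega
  exact Nat.eq_of_mul_eq_mul_right (by omega) h5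

lemma fib_eq {s : F} (hs : s ∈ mU q F) :
    ((univ.erase (0:F)).filter fun u => u ^ (q - 1) = s).card = q - 1 := by
  have := (Finset.sum_eq_sum_iff_of_le (fun i (_ : i ∈ mU q F) => fib_le hq hcard i)).mp ?_ s hs
  · exact this
  · rw [sum_fib hq hcard, Finset.sum_const, smul_eq_mul, card_mU hq hcard, Nat.mul_comm,
      qarith hq]

lemma pull (h : F → ℕ) :
    ∑ u : F, h (u ^ (q - 1)) = h 0 + (q - 1) * ∑ a ∈ mU q F, h a := by
  have h0 : (0:F) ^ (q - 1) = 0 := zero_pow (by omega)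
  rw [← Finset.add_sum_erase univ (fun u : F => h (u ^ (q - 1))) (mem_univ 0), h0]
  congr 1
  rw [Finset.mul_sum]
  rw [← Finset.sum_fiberwise_of_maps_to (fun u hu => pow_mem_mU hq hcard
    (Finset.ne_of_mem_erase hu)) (fun u : F => h (u ^ (q - 1)))]
  refine Finset.sum_congr rfl fun s hs => ?_
  have : ∀ u ∈ (univ.erase (0:F)).filter (fun u => u ^ (q - 1) = s),
      h (u ^ (q - 1)) = h s := by
    intro u hu
    rw [(Finset.mem_filter.mp hu).2]
  rw [Finset.sum_congr rfl this, Finset.sum_const, smul_eq_mul, fib_eq hq hcard hs]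

end Forcing

lemma chi_zero : chi q F 0 = 0 := by
  simp [chi, zero_pow (Nat.succ_ne_zero q)]

lemma chi_collapse (s : F) :
    (∑ a ∈ mU q F, if s - a = 0 then 1 else 0) = chi q F s := by
  have : ∀ a ∈ mU q F, (if s - a = 0 then 1 else 0) = if s = a then 1 else 0 := by
    intro a _
    simp [sub_eq_zero]
  rw [Finset.sum_congr rfl this, Finset.sum_ite_eq]
  simp only [chi, mem_mU]

section Values

variable (hq : 2 ≤ q) (hcard : Fintype.card F = q ^ 2)
include hq hcard

lemma v1 (s : F) : c1 q F s = (if s = 0 then 1 else 0) + (q - 1) * chi q F s := by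
  have := pull hq hcard (fun t => if s - t = 0 then 1 else 0)
  simp only [sub_zero] at this
  rw [c1, this, chi_collapse]

lemma v2 (s : F) : c2 q F s = (if s = 0 then 1 else 0) + 2 * (q - 1) * chi q F s
    + (q - 1) ^ 2 * nb q F s := by
  have h := pull hq hcard (fun t => c1 q F (s - t))
  simp only [sub_zero] at h
  rw [c2, h, v1 hq hcard s]
  have : ∀ a ∈ mU q F, c1 q F (s - a)
      = (if s - a = 0 then 1 else 0) + (q - 1) * chi q F (s - a) := fun a _ => v1 hq hcard _
  rw [Finset.sum_congr rfl this, Finset.sum_add_distrib, chi_collapse, ← Finset.mul_sum]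
  show _ = _ + _ * (∑ a ∈ mU q F, chi q F (s - a))
  rw [← nb]
  ring

lemma v3 (s : F) : c3 q F s = (if s = 0 then 1 else 0) + 3 * (q - 1) * chi q F s
    + 3 * (q - 1) ^ 2 * nb q F s + (q - 1) ^ 3 * n3 q F s := by
  have h := pull hq hcard (fun t => c2 q F (s - t))
  simp only [sub_zero] at h
  rw [c3, h, v2 hq hcard s]
  have : ∀ a ∈ mU q F, c2 q F (s - a)
      = (if s - a = 0 then 1 else 0) + 2 * (q - 1) * chi q F (s - a)
        + (q - 1) ^ 2 * nb q F (s - a) := fun a _ => v2 hq hcard _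
  rw [Finset.sum_congr rfl this, Finset.sum_add_distrib, Finset.sum_add_distrib,
    chi_collapse, ← Finset.mul_sum, ← Finset.mul_sum]
  rw [show (∑ a ∈ mU q F, chi q F (s - a)) = nb q F s from rfl,
    show (∑ a ∈ mU q F, nb q F (s - a)) = n3 q F s from rfl]
  ring

end Values

section Neg

variable (hNEG : ∀ x : F, (-x) ^ (q + 1) = x ^ (q + 1))
variable (cmu : (mU q F).card = q + 1)

include hNEG in
lemma neg_mem_mU {a : F} (h : a ∈ mU q F) : -a ∈ mU q F := by
  rw [mem_mU, hNEG]; exact mem_mU.mp h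

include hNEG cmu in
lemma nb_zero : nb q F 0 = q + 1 := by
  rw [nb, ← cmu]
  rw [Finset.sum_congr rfl (fun a ha => ?_), Finset.sum_const, smul_eq_mul, mul_one]
  have : -a ∈ mU q F := neg_mem_mU hNEG ha
  simp only [chi, zero_sub]
  rw [if_pos (mem_mU.mp this)]

lemma n3_zero : n3 q F 0 = S3 q F := by
  rw [n3, S3]
  exact Finset.sum_congr rfl fun a _ => by rw [zero_sub]

include hNEG cmu in
lemma sum_chi_neg : (∑ a ∈ mU q F, chi q F (-a)) = q + 1 := by
  have := nb_zero (q := q) (F := F) hNEG cmu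
  rw [nb] at this
  rw [← this]
  exact Finset.sum_congr rfl fun a _ => by rw [zero_sub]

end Neg

lemma v4 (hq : 2 ≤ q) (hcard : Fintype.card F = q ^ 2)
    (hNEG : ∀ x : F, (-x) ^ (q + 1) = x ^ (q + 1)) :
    c4 q F 0
    = 1 + 6*(q-1)^2*(q+1) + 4*(q-1)^3 * S3 q F + (q-1)^4 * S4 q F := by
  have cmu := card_mU hq hcard
  have hpull := pull hq hcard (fun t => c3 q F (0 - t))
  simp only [sub_zero] at hpull
  rw [c4, hpull, v3 hq hcard]
  have hz : ∀ a ∈ mU q F, c3 q F (0 - a)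
      = 3 * (q - 1) * chi q F (-a) + (3 * (q - 1) ^ 2 * nb q F (-a)
        + (q - 1) ^ 3 * n3 q F (-a)) := by
    intro a ha
    rw [zero_sub, v3 hq hcard, if_neg (by simpa using ne_zero_of_mem_mU ha)]
    ring
  rw [Finset.sum_congr rfl hz, Finset.sum_add_distrib, Finset.sum_add_distrib,
    ← Finset.mul_sum, ← Finset.mul_sum, ← Finset.mul_sum, sum_chi_neg hNEG cmu,
    if_pos rfl, chi_zero, nb_zero hNEG cmu, n3_zero]
  have hS4 : (∑ a ∈ mU q F, n3 q F (-a)) = S4 q F := by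
    rw [S4]
    refine Finset.sum_congr rfl fun a _ => Finset.sum_congr rfl fun b _ => ?_
    rw [show -a - b = -(a + b) by ring]
  rw [hS4, show (∑ a ∈ mU q F, nb q F (-a)) = S3 q F from rfl]
  ring

section Key3

variable (hfrob : ∀ x y : F, (x + y) ^ q = x ^ q + y ^ q)
variable (hNEG : ∀ x : F, (-x) ^ (q + 1) = x ^ (q + 1))

include hfrob hNEG in
lemma key3 {a b : F} (ha : a ^ (q+1) = 1) (hb : b ^ (q+1) = 1) :
    ((-(a + b)) ^ (q + 1) = 1) ↔ a * a + a * b + b * b = 0 := by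
  rw [hNEG]
  have ha' : a ≠ 0 := ne_zero_of_pow ha
  have hb' : b ≠ 0 := ne_zero_of_pow hb
  have h1 : a ^ q * a = 1 := by rw [← pow_succ]; exact ha
  have h2 : b ^ q * b = 1 := by rw [← pow_succ]; exact hb
  have hab : (a + b) ^ (q + 1) * (a * b) = (a + b) ^ 2 := by
    rw [pow_succ, hfrob]
    linear_combination (b * (a + b)) * h1 + (a * (a + b)) * h2
  constructor
  · intro h
    rw [h, one_mul] at hab
    linear_combination -hab
  · intro h
    have h3 : (a + b) ^ 2 = a * b := by linear_combination h
    rw [h3] at hab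
    exact mul_right_cancel₀ (mul_ne_zero ha' hb') (by rw [hab, one_mul])

include hfrob hNEG in
lemma S3_eq (hq : 2 ≤ q) (hcard : Fintype.card F = q ^ 2) :
    S3 q F = (q + 1) * (mR q F).card := by
  have cmu := card_mU hq hcard
  rw [S3]
  have hinner : ∀ a ∈ mU q F, nb q F (-a) = (mR q F).card := by
    intro a ha
    have ha0 : a ≠ 0 := ne_zero_of_mem_mU ha
    rw [nb]
    have hcongr : ∀ b ∈ mU q F, chi q F (-a - b)
        = if a * a + a * b + b * b = 0 then 1 else 0 := by
      intro b hb
      show (if (-a - b) ^ (q+1) = 1 then 1 else 0) = _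
      rw [show -a - b = -(a + b) by ring]
      exact if_congr (key3 hfrob hNEG (mem_mU.mp ha) (mem_mU.mp hb)) rfl rfl
    rw [Finset.sum_congr rfl hcongr, ← Finset.card_filter]
    have himg : (mU q F).filter (fun b => a * a + a * b + b * b = 0)
        = (mR q F).image (fun t => t * a) := by
      ext x
      simp only [Finset.mem_filter, Finset.mem_image, mR]
      constructor
      · rintro ⟨hxmu, hcond⟩
        have hta : x * a⁻¹ * a = x := by
          rw [mul_assoc, inv_mul_cancel₀ ha0, mul_one]
        refine ⟨x * a⁻¹, ⟨?_, ?_⟩, hta⟩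
        · rw [mem_mU, mul_pow, inv_pow, mem_mU.mp hxmu, mem_mU.mp ha, inv_one, mul_one]
        · set t := x * a⁻¹ with hT
          have expand : a ^ 2 * (t * t + t + 1) = a * a + a * (t * a) + (t * a) * (t * a) := by
            ring
          rw [hta] at expand
          have h0 : a ^ 2 * (t * t + t + 1) = 0 := expand.trans hcond
          exact (mul_eq_zero.mp h0).resolve_left (pow_ne_zero _ ha0)
      · rintro ⟨t, htm, hta⟩
        obtain ⟨htmu, htroot⟩ := htm
        constructor
        · rw [mem_mU, ← hta, mul_pow, mem_mU.mp htmu, mem_mU.mp ha, mul_one]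
        · rw [← hta]
          linear_combination (a ^ 2) * htroot
    rw [himg, Finset.card_image_of_injective _ (mul_left_injective₀ ha0)]
  rw [Finset.sum_congr rfl hinner, Finset.sum_const, smul_eq_mul, cmu]

end Key3

lemma mR_char3 (h3 : (3 : F) = 0) : (mR q F).card = 1 := by
  have : mR q F = {1} := by
    ext t
    simp only [mR, Finset.mem_filter, Finset.mem_singleton]
    constructor
    · rintro ⟨_, hroot⟩
      have hsq : (t - 1) ^ 2 = 0 := by linear_combination hroot - t * h3
      exact sub_eq_zero.mp (by simpa using pow_eq_zero_iff (two_ne_zero (α := ℕ)) |>.mp hsq)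
    · rintro rfl
      refine ⟨mem_mU.mpr (one_pow _), ?_⟩
      linear_combination h3
  rw [this, Finset.card_singleton]

lemma mR_one (hmod : q % 3 = 1) (h3 : (3 : F) ≠ 0) : (mR q F).card = 0 := by
  rw [Finset.card_eq_zero, Finset.eq_empty_iff_forall_notMem]
  intro t ht
  obtain ⟨htmu, htroot⟩ := Finset.mem_filter.mp ht
  have ht3 : t ^ 3 = 1 := by linear_combination (t - 1) * htroot
  obtain ⟨j, hj⟩ : ∃ j, q + 1 = 3 * j + 2 := ⟨q / 3, by omega⟩
  have htq : t ^ (q + 1) = t ^ 2 := by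
    rw [hj, pow_add, pow_mul, ht3, one_pow, one_mul]
  have ht2 : t ^ 2 = 1 := by rw [← htq]; exact mem_mU.mp htmu
  have ht1 : t = 1 := by
    have : t ^ 3 = t ^ 2 * t := by ring
    rw [ht3, ht2, one_mul] at this
    exact this.symm
  rw [ht1] at htroot
  exact h3 (by linear_combination htroot)

lemma mR_two (hq : 2 ≤ q) (hcard : Fintype.card F = q ^ 2) (hmod : q % 3 = 2) :
    (mR q F).card = 2 := by
  have hdvd : 3 ∣ q ^ 2 - 1 := by
    have hqq : q * q % 3 = 1 := by rw [Nat.mul_mod, hmod]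
    have hge : 2 * 2 ≤ q * q := Nat.mul_le_mul hq hq
    rw [sq]
    omega
  haveI : Fact (Nat.Prime 3) := ⟨by norm_num⟩
  obtain ⟨ζ, hζ⟩ := exists_prime_orderOf_dvd_card (G := Fˣ) 3
    (by rw [Fintype.card_units, hcard]; exact hdvd)
  set ω : F := (ζ : F) with hw
  have hω3 : ω ^ 3 = 1 := by
    have h := pow_orderOf_eq_one ζ
    rw [hζ] at h
    calc ω ^ 3 = ((ζ ^ 3 : Fˣ) : F) := by rw [Units.val_pow_eq_pow_val]
      _ = 1 := by rw [h, Units.val_one]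
  have hω0 : ω ≠ 0 := Units.ne_zero ζ
  have hω1 : ω ≠ 1 := by
    intro h
    have hz1 : ζ = 1 := Units.ext (h.trans Units.val_one.symm)
    rw [hz1, orderOf_one] at hζ
    norm_num at hζ
  have hωroot : ω * ω + ω + 1 = 0 := by
    have hfac : (ω - 1) * (ω * ω + ω + 1) = 0 := by linear_combination hω3
    exact (mul_eq_zero.mp hfac).resolve_left (sub_ne_zero.mpr hω1)
  obtain ⟨j, hj⟩ : ∃ j, q + 1 = 3 * j := ⟨(q + 1) / 3, by omega⟩
  have hωmu : ω ∈ mU q F := by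
    rw [mem_mU, hj, pow_mul, hω3, one_pow]
  have hω2mu : ω * ω ∈ mU q F := by
    rw [mem_mU, mul_pow, mem_mU.mp hωmu, mul_one]
  have hne : ω ≠ ω * ω := by
    intro h
    have : ω * (1 - ω) = 0 := by linear_combination h
    rcases mul_eq_zero.mp this with h' | h'
    · exact hω0 h'
    · exact hω1 (by linear_combination -h')
  have hset : mR q F = {ω, ω * ω} := by
    ext t
    simp only [mR, Finset.mem_filter, Finset.mem_insert, Finset.mem_singleton]
    constructor
    · rintro ⟨htmu, htroot⟩
      have hfac : (t - ω) * (t - ω * ω) = 0 := by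
        linear_combination htroot - t * hωroot + hω3
      rcases mul_eq_zero.mp hfac with h' | h'
      · exact Or.inl (sub_eq_zero.mp h')
      · exact Or.inr (sub_eq_zero.mp h')
    · rintro (rfl | rfl)
      · exact ⟨hωmu, hωroot⟩
      · refine ⟨hω2mu, ?_⟩
        linear_combination hωroot + ω * hω3
  rw [hset, Finset.card_pair hne]

section Uniq

variable (hfrob : ∀ x y : F, (x + y) ^ q = x ^ q + y ^ q)
variable (hNEG : ∀ x : F, (-x) ^ (q + 1) = x ^ (q + 1))

include hfrob in
lemma prod_rel {c d s : F} (hc : c ^ (q+1) = 1) (hd : d ^ (q+1) = 1) (h1 : c + d = s) :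
    s ^ q * (c * d) = s := by
  have e1 : c ^ q * c = 1 := by rw [← pow_succ]; exact hc
  have e2 : d ^ q * d = 1 := by rw [← pow_succ]; exact hd
  have hsq : s ^ q = c ^ q + d ^ q := by rw [← h1, hfrob]
  rw [hsq, ← h1]
  linear_combination d * e1 + c * e2

include hfrob in
lemma uniq {c d c' d' s : F} (hc : c ^ (q+1) = 1) (hd : d ^ (q+1) = 1)
    (hc' : c' ^ (q+1) = 1) (hd' : d' ^ (q+1) = 1)
    (h1 : c + d = s) (h2 : c' + d' = s) (hs : s ≠ 0) : c' = c ∨ c' = d := by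
  have hA := prod_rel hfrob hc hd h1
  have hB := prod_rel hfrob hc' hd' h2
  have hcan : c * d = c' * d' :=
    mul_left_cancel₀ (pow_ne_zero q hs) (hA.trans hB.symm)
  have hsum : c + d = c' + d' := h1.trans h2.symm
  have hfac : (c' - c) * (c' - d) = 0 := by
    linear_combination (-c') * hsum + hcan
  rcases mul_eq_zero.mp hfac with h' | h'
  · exact Or.inl (sub_eq_zero.mp h')
  · exact Or.inr (sub_eq_zero.mp h')

include hfrob hNEG in
lemma nb_of_ne {a b : F} (ha : a ∈ mU q F) (hb : b ∈ mU q F) (hab : a + b ≠ 0) :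
    nb q F (-(a + b)) = if a = b then 1 else 2 := by
  have hstep : nb q F (-(a+b))
      = ((mU q F).filter fun x => (-(a + b) - x) ^ (q + 1) = 1).card := by
    rw [Finset.card_filter]; rfl
  have hset : ((mU q F).filter fun x => (-(a + b) - x) ^ (q + 1) = 1)
      = ({-a, -b} : Finset F) := by
    ext x
    simp only [Finset.mem_filter, Finset.mem_insert, Finset.mem_singleton]
    constructor
    · rintro ⟨hxmu, hpow⟩
      have hsum2 : x + (-(a + b) - x) = -a + -b := by ring
      have hsne : -a + -b ≠ 0 := by
        intro h; exact hab (by linear_combination -h)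
      exact uniq hfrob (by rw [hNEG]; exact mem_mU.mp ha)
        (by rw [hNEG]; exact mem_mU.mp hb) (mem_mU.mp hxmu) hpow rfl hsum2 hsne
    · rintro (rfl | rfl)
      · refine ⟨neg_mem_mU hNEG ha, ?_⟩
        rw [show -(a + b) - -a = -b by ring, hNEG]
        exact mem_mU.mp hb
      · refine ⟨neg_mem_mU hNEG hb, ?_⟩
        rw [show -(a + b) - -b = -a by ring, hNEG]
        exact mem_mU.mp ha
  rw [hstep, hset]
  split_ifs with h
  · rw [h]
    simp
  · rw [Finset.card_pair (fun hh => h (neg_inj.mp hh))]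

include hfrob hNEG in
lemma S4_inner (hq : 2 ≤ q) (hcard : Fintype.card F = q ^ 2)
    {a : F} (ha : a ∈ mU q F) :
    (∑ b ∈ mU q F, nb q F (-(a + b)))
      = (q + 1) + (2 * q - if a + a = 0 then 0 else 1) := by
  have cmu := card_mU hq hcard
  have hnegmem : -a ∈ mU q F := neg_mem_mU hNEG ha
  rw [← Finset.add_sum_erase _ _ hnegmem]
  have h1 : -(a + -a) = (0 : F) := by ring
  rw [h1, nb_zero hNEG cmu]
  congr 1
  have h2 : ∀ b ∈ (mU q F).erase (-a), nb q F (-(a + b)) = if a = b then 1 else 2 := by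
    intro b hb
    obtain ⟨hbne, hbmu⟩ := Finset.mem_erase.mp hb
    refine nb_of_ne hfrob hNEG ha hbmu (fun h => hbne ?_)
    exact eq_neg_of_add_eq_zero_right h
  rw [Finset.sum_congr rfl h2]
  have hcarde : ((mU q F).erase (-a)).card = q := by
    rw [Finset.card_erase_of_mem hnegmem, cmu]; omega
  have hsplit : ∀ b : F, ((if a = b then 1 else 2) : ℕ) + (if a = b then 1 else 0) = 2 := by
    intro b; split_ifs <;> rfl
  have htot : (∑ b ∈ (mU q F).erase (-a), ((if a = b then 1 else 2) : ℕ))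
      + (∑ b ∈ (mU q F).erase (-a), ((if a = b then 1 else 0) : ℕ)) = 2 * q := by
    rw [← Finset.sum_add_distrib, Finset.sum_congr rfl (fun b _ => hsplit b),
      Finset.sum_const, hcarde, smul_eq_mul]
    ring
  have hind : (∑ b ∈ (mU q F).erase (-a), ((if a = b then 1 else 0) : ℕ))
      = if a ∈ (mU q F).erase (-a) then 1 else 0 := Finset.sum_ite_eq _ _ _
  by_cases hd : a + a = 0
  · have hna : -a = a := neg_eq_of_add_eq_zero_left hd
    rw [hna] at htot hind ⊢
    rw [hind, if_neg (Finset.notMem_erase a _)] at htot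
    rw [if_pos hd]
    omega
  · have hmem : a ∈ (mU q F).erase (-a) := Finset.mem_erase.mpr
      ⟨fun h => hd (by linear_combination h), ha⟩
    rw [if_neg hd]
    rw [hind, if_pos hmem] at htot
    omega

end Uniq

end FermatSurfaceAux

namespace FermatSurfaceAux

set_option linter.unusedSectionVars false
set_option maxHeartbeats 1000000

variable {F : Type*} [Field F] [Fintype F] [DecidableEq F] {q : ℕ}

lemma S4_eq (hq : 2 ≤ q) (hcard : Fintype.card F = q ^ 2)
    (hfrob : ∀ x y : F, (x + y) ^ q = x ^ q + y ^ q)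
    (hNEG : ∀ x : F, (-x) ^ (q + 1) = x ^ (q + 1))
    (e : ℕ) (he : ∀ a ∈ mU q F, (if a + a = (0:F) then 0 else 1) = e) :
    S4 q F = (q + 1) * ((q + 1) + (2 * q - e)) := by
  rw [S4]
  have : ∀ a ∈ mU q F, (∑ b ∈ mU q F, nb q F (-(a + b))) = (q + 1) + (2 * q - e) := by
    intro a ha
    rw [S4_inner hfrob hNEG hq hcard ha, he a ha]
  rw [Finset.sum_congr rfl this, Finset.sum_const, card_mU hq hcard, smul_eq_mul]

end FermatSurfaceAux

open FermatSurfaceAux in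
theorem fermat_surface_count {p r : ℕ} (hp : p.Prime) (hr : 0 < r) {q : ℕ} (hq : q = p ^ r)
    {F : Type*} [Field F] [Fintype F] (hF : Fintype.card F = q ^ 2) :
    Nat.card {t : F × F × F × F //
        t ≠ 0 ∧
          t.1 ^ (q - 1) + t.2.1 ^ (q - 1) + t.2.2.1 ^ (q - 1) + t.2.2.2 ^ (q - 1) = 0} =
      (q ^ 2 - 1) *
        (if q % 6 = 1 then 3 * (q - 1) ^ 4 + 3 * (q - 1) ^ 3 + 6 * (q - 1)
         else if q % 6 = 5 then
           3 * (q - 1) ^ 4 + 3 * (q - 1) ^ 3 + 8 * (q - 1) ^ 2 + 6 * (q - 1)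
         else if q % 3 = 0 then
           3 * (q - 1) ^ 4 + 3 * (q - 1) ^ 3 + 4 * (q - 1) ^ 2 + 6 * (q - 1)
         else if q % 6 = 4 then (3 * q + 1) * (q - 1) ^ 3 + 6 * (q - 1)
         else (3 * q + 1) * (q - 1) ^ 3 + 8 * (q - 1) ^ 2 + 6 * (q - 1)) := by
  classical
  have hq2 : 2 ≤ q := by
    rw [hq]
    calc 2 ≤ p := hp.two_le
      _ ≤ p ^ r := Nat.le_self_pow hr.ne' p
  -- characteristic
  haveI instC : CharP F (ringChar F) := ringChar.charP F
  have hcprime : (ringChar F).Prime := CharP.char_is_prime F (ringChar F)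
  have hpF : (p : F) = 0 := by
    have h1 : ((Fintype.card F : ℕ) : F) = 0 := FiniteField.cast_card_eq_zero F
    rw [hF] at h1
    push_cast at h1
    have h2 : (q : F) = 0 := pow_eq_zero_iff (two_ne_zero (α := ℕ)) |>.mp h1
    rw [hq] at h2
    push_cast at h2
    exact pow_eq_zero_iff hr.ne' |>.mp h2
  have hrc : ringChar F = p :=
    (Nat.prime_dvd_prime_iff_eq hcprime hp).mp
      ((CharP.cast_eq_zero_iff F (ringChar F) p).mp hpF)
  haveI instP : CharP F p := hrc ▸ instC
  haveI : Fact p.Prime := ⟨hp⟩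
  have hfrob : ∀ x y : F, (x + y) ^ q = x ^ q + y ^ q := by
    intro x y
    rw [hq]
    exact add_pow_char_pow x y p r
  -- parity facts
  have hNEG : ∀ x : F, (-x) ^ (q + 1) = x ^ (q + 1) := by
    rcases Nat.even_or_odd q with he | ho
    · have hp2 : p = 2 := by
        have h2q : 2 ∣ q := he.two_dvd
        rw [hq] at h2q
        exact ((Nat.prime_dvd_prime_iff_eq Nat.prime_two hp).mp
          (Nat.Prime.dvd_of_dvd_pow Nat.prime_two h2q)).symm
      haveI : CharP F 2 := hp2 ▸ instP
      intro x
      rw [CharTwo.neg_eq]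
    · intro x
      exact Even.neg_pow (Odd.add_one ho) x
  -- counting
  have cmu := card_mU hq2 hF (F := F)
  set P : F × F × F × F → Prop := fun t =>
    t.1 ^ (q - 1) + t.2.1 ^ (q - 1) + t.2.2.1 ^ (q - 1) + t.2.2.2 ^ (q - 1) = 0 with hP
  have hNat : Nat.card {t : F × F × F × F // t ≠ 0 ∧ P t}
      = (univ.filter fun t : F × F × F × F => t ≠ 0 ∧ P t).card := by
    rw [Nat.card_eq_fintype_card, Fintype.card_subtype]
  have hErase : (univ.filter fun t : F × F × F × F => t ≠ 0 ∧ P t)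
      = (univ.filter fun t : F × F × F × F => P t).erase 0 := by
    ext t
    simp only [Finset.mem_filter, Finset.mem_erase, Finset.mem_univ, true_and, and_comm]
  have h0mem : (0 : F × F × F × F) ∈ univ.filter (fun t : F × F × F × F => P t) := by
    simp only [Finset.mem_filter, Finset.mem_univ, true_and, hP]
    norm_num [zero_pow (show q - 1 ≠ 0 by omega)]
  have hAc : (univ.filter fun t : F × F × F × F => P t).card = c4 q F 0 := by
    rw [Finset.card_filter]
    rw [Fintype.sum_prod_type, ]
    simp only [Fintype.sum_prod_type]
    show _ = c4 q F 0
    rw [c4]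
    refine Finset.sum_congr rfl fun u _ => ?_
    rw [c3]
    refine Finset.sum_congr rfl fun v _ => ?_
    rw [c2]
    refine Finset.sum_congr rfl fun w _ => ?_
    rw [c1]
    refine Finset.sum_congr rfl fun x _ => ?_
    refine if_congr ?_ rfl rfl
    simp only [hP]
    constructor <;> intro h <;> linear_combination (-1 : F) * h
  have hv4 := v4 hq2 hF hNEG (F := F)
  have hcount : (univ.filter fun t : F × F × F × F => t ≠ 0 ∧ P t).card
      = 6*(q-1)^2*(q+1) + 4*(q-1)^3 * S3 q F + (q-1)^4 * S4 q F := by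
    rw [hErase, Finset.card_erase_of_mem h0mem, hAc, hv4]
    omega
  rw [hNat, hcount]
  -- S3 value
  have hS3 := S3_eq hfrob hNEG hq2 hF
  -- S4 value
  have hS4odd : q % 2 = 1 → S4 q F = (q + 1) * (3 * q) := by
    intro hodd
    have hp2 : p ≠ 2 := by
      intro hp2
      rw [hp2] at hq
      have : 2 ∣ q := hq ▸ dvd_pow_self 2 hr.ne'
      omega
    have h2F : (2 : F) ≠ 0 := by
      intro h2F
      exact hp2 ((Nat.prime_dvd_prime_iff_eq hp Nat.prime_two).mp
        ((CharP.cast_eq_zero_iff F p 2).mp h2F))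
    have he : ∀ a ∈ mU q F, (if a + a = (0:F) then 0 else 1) = 1 := by
      intro a ha
      rw [if_neg]
      intro hadd
      have : (2 : F) * a = 0 := by linear_combination hadd
      rcases mul_eq_zero.mp this with h' | h'
      · exact h2F h'
      · exact ne_zero_of_mem_mU ha h'
    have := S4_eq hq2 hF hfrob hNEG 1 he
    rw [this]
    congr 1
    omega
  have hS4even : q % 2 = 0 → S4 q F = (q + 1) * (3 * q + 1) := by
    intro heven
    have hp2 : p = 2 := by
      have h2q : 2 ∣ q := by omega
      rw [hq] at h2q
      exact ((Nat.prime_dvd_prime_iff_eq Nat.prime_two hp).mp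
        (Nat.Prime.dvd_of_dvd_pow Nat.prime_two h2q)).symm
    haveI : CharP F 2 := hp2 ▸ instP
    have he : ∀ a ∈ mU q F, (if a + a = (0:F) then 0 else 1) = 0 := by
      intro a ha
      rw [if_pos (CharTwo.add_self_eq_zero a)]
    have := S4_eq hq2 hF hfrob hNEG 0 he
    rw [this]
    congr 1
    omega
  -- m values helpers
  have h3ne : q % 3 ≠ 0 → (3:F) ≠ 0 := by
    intro hmod h3
    have hdvd : p ∣ 3 := (CharP.cast_eq_zero_iff F p 3).mp h3
    have hp3 : p = 3 := (Nat.prime_dvd_prime_iff_eq hp (by norm_num)).mp hdvd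
    apply hmod
    have h3q : 3 ∣ q := by rw [hq, hp3]; exact dvd_pow_self 3 hr.ne'
    omega
  have hq21 : q ^ 2 - 1 = (q - 1) * (q + 1) := (qarith hq2).symm
  by_cases h61 : q % 6 = 1
  · rw [if_pos h61, hS3, mR_one (by omega) (h3ne (by omega)), hS4odd (by omega), hq21]
    obtain ⟨k, rfl⟩ : ∃ k, q = k + 2 := ⟨q - 2, by omega⟩
    simp only [show k + 2 - 1 = k + 1 from rfl]
    ring
  rw [if_neg h61]
  by_cases h65 : q % 6 = 5
  · rw [if_pos h65, hS3, mR_two hq2 hF (by omega), hS4odd (by omega), hq21]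
    obtain ⟨k, rfl⟩ : ∃ k, q = k + 2 := ⟨q - 2, by omega⟩
    simp only [show k + 2 - 1 = k + 1 from rfl]
    ring
  rw [if_neg h65]
  by_cases h30 : q % 3 = 0
  · have h3q : 3 ∣ q := by omega
    rw [hq] at h3q
    have hp3 : p = 3 :=
      ((Nat.prime_dvd_prime_iff_eq (by norm_num) hp).mp
        (Nat.Prime.dvd_of_dvd_pow (by norm_num) h3q)).symm
    have h3F : (3 : F) = 0 := by
      have h' := hpF
      rw [hp3] at h'
      exact_mod_cast h'
    have hodd : q % 2 = 1 := by
      have hoddq : Odd q := by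
        rw [hq, hp3]
        exact Odd.pow (Nat.odd_iff.mpr rfl)
      obtain ⟨t, ht⟩ := hoddq
      omega
    rw [if_pos h30, hS3, mR_char3 h3F, hS4odd hodd, hq21]
    obtain ⟨k, rfl⟩ : ∃ k, q = k + 2 := ⟨q - 2, by omega⟩
    simp only [show k + 2 - 1 = k + 1 from rfl]
    ring
  rw [if_neg h30]
  by_cases h64 : q % 6 = 4
  · rw [if_pos h64, hS3, mR_one (by omega) (h3ne (by omega)), hS4even (by omega), hq21]
    obtain ⟨k, rfl⟩ : ∃ k, q = k + 2 := ⟨q - 2, by omega⟩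
    simp only [show k + 2 - 1 = k + 1 from rfl]
    ring
  rw [if_neg h64]
  have h62 : q % 6 = 2 := by omega
  rw [hS3, mR_two hq2 hF (by omega), hS4even (by omega), hq21]
  obtain ⟨k, rfl⟩ : ∃ k, q = k + 2 := ⟨q - 2, by omega⟩
  simp only [show k + 2 - 1 = k + 1 from rfl]
  ring
end

section
/- Let q = p^r be a power of a prime p and let F_{q^3} denote the finite field with q^3 elements. Define T(X) := X^{q^2} + X^q + X. If v ∈ F_{q^3} is nonzero and satisfies T(v) = 0 and T(v^{-1}) = 0, then v^{q^2 - 2q + 1} = 1; consequently (v^{q-1})^3 = 1, and if q ≢ 1 (mod 3) then v^{q-1} = 1. -/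
private lemma aux_step {F : Type*} [Field F] {q : ℕ} (hq : 1 ≤ q) (w : F) (hw : w ≠ 0)
    (h : w ^ (q ^ 2) + w ^ q + w = 0) :
    (w ^ (q - 1)) ^ q * w ^ (q - 1) + w ^ (q - 1) + 1 = 0 := by
  set s := w ^ (q - 1) with hs
  have hws : w ^ q = s * w := by
    rw [hs, ← pow_succ, Nat.sub_add_cancel hq]
  have hq2 : w ^ (q ^ 2) = s ^ q * (s * w) := by
    rw [pow_two, pow_mul, hws, mul_pow, hws]
  rw [hq2, hws] at h
  have h' : (s ^ q * s + s + 1) * w = 0 := by linear_combination h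
  rcases mul_eq_zero.mp h' with h'' | h''
  · linear_combination h''
  · exact absurd h'' hw

theorem fermat_curve_Fq3_common_roots {p r : ℕ} (hp : p.Prime) (hr : 0 < r) {q : ℕ}
    (hq : q = p ^ r)
    {F : Type*} [Field F] [Fintype F] (hF : Fintype.card F = q ^ 3)
    (v : F) (hv : v ≠ 0)
    (h1 : v ^ (q ^ 2) + v ^ q + v = 0)
    (h2 : (v⁻¹) ^ (q ^ 2) + (v⁻¹) ^ q + v⁻¹ = 0) :
    v ^ (q ^ 2 - 2 * q + 1) = 1 ∧ (v ^ (q - 1)) ^ 3 = 1 ∧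
      (q % 3 ≠ 1 → v ^ (q - 1) = 1) := by
  have hq2 : 2 ≤ q := by
    have h2p : 2 ≤ p := hp.two_le
    calc 2 ≤ p := h2p
    _ = p ^ 1 := (pow_one p).symm
    _ ≤ p ^ r := Nat.pow_le_pow_right (by omega) hr
    _ = q := hq.symm
  have hq1 : 1 ≤ q := by omega
  have hA : (v ^ (q - 1)) ^ q * (v ^ (q - 1)) + (v ^ (q - 1)) + 1 = 0 :=
    aux_step hq1 v hv h1
  have hBu : ((v⁻¹) ^ (q - 1)) ^ q * (v⁻¹) ^ (q - 1) + (v⁻¹) ^ (q - 1) + 1 = 0 :=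
    aux_step hq1 v⁻¹ (inv_ne_zero hv) h2
  rw [inv_pow] at hBu
  obtain ⟨t, ht⟩ : ∃ t : F, v ^ (q - 1) = t := ⟨_, rfl⟩
  rw [ht] at hA hBu
  have ht0 : t ≠ 0 := ht ▸ pow_ne_zero _ hv
  have htq0 : t ^ q ≠ 0 := pow_ne_zero _ ht0
  rw [inv_pow] at hBu
  have hB : 1 + t ^ q + t ^ q * t = 0 := by
    field_simp at hBu
    have h' : (1 + t ^ q + t ^ q * t) * t = 0 := by linear_combination t * hBu
    rcases mul_eq_zero.mp h' with h'' | h''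
    · exact h''
    · exact absurd h'' ht0
  have htq : t ^ q = t := by linear_combination hB - hA
  have ht3' : t ^ 2 + t + 1 = 0 := by
    rw [htq] at hA; linear_combination hA
  have ht3 : t ^ 3 = 1 := by linear_combination (t - 1) * ht3'
  have htq1 : t ^ (q - 1) = 1 := by
    have h' : t ^ (q - 1) * t = 1 * t := by
      rw [← pow_succ, Nat.sub_add_cancel hq1, htq, one_mul]
    exact mul_right_cancel₀ ht0 h'
  have hexp : q ^ 2 - 2 * q + 1 = (q - 1) * (q - 1) := by
    have hsq : q ^ 2 = q * q := sq q
    rcases Nat.exists_eq_add_of_le hq2 with ⟨m, rfl⟩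
    have e1 : (2 + m) * (2 + m) = m * m + 4 * m + 4 := by ring
    have e2 : (2 + m - 1) * (2 + m - 1) = (m + 1) * (m + 1) := by
      congr 1 <;> omega
    have e3 : (m + 1) * (m + 1) = m * m + 2 * m + 1 := by ring
    omega
  refine ⟨?_, by rw [ht]; exact ht3, ?_⟩
  · rw [hexp, mul_comm, pow_mul, ht, htq1]
  · intro hmod
    rw [ht]
    have hdvd3 : orderOf t ∣ 3 := orderOf_dvd_of_pow_eq_one ht3
    have hdvdq : orderOf t ∣ (q - 1) := orderOf_dvd_of_pow_eq_one htq1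
    have hnd : ¬ (3 ∣ (q - 1)) := by omega
    have hcop : Nat.Coprime 3 (q - 1) :=
      (Nat.Prime.coprime_iff_not_dvd (by norm_num)).mpr hnd
    have hg : orderOf t ∣ Nat.gcd 3 (q - 1) := Nat.dvd_gcd hdvd3 hdvdq
    rw [hcop] at hg
    exact orderOf_eq_one_iff.mp (Nat.eq_one_of_dvd_one hg)
end
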